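/- arXiv:2002.00309 — 6 statements merged into one kernel-verified Lean document; each statement's English description precedes it below -/
import Mathlib

section
/- If a graph G is k-regular and dispersable (i.e., mbt(G) = Δ(G) = k), then G is bipartite. -/
open SimpleGraph
open scoped Classical

/-- A matching book embedding of `G` in `k` pages: a linear order (spine) on the
vertices together with a page assignment for the edges such that each page is a
matching (every vertex has degree at most one per page) and edges on the same
page do not cross with respect to the spine order. -/
structure MatchingBookEmbedding {V : Type*} [Fintype V] (G : SimpleGraph V) (k : ℕ) where
  ord : V ≃ Fin (Fintype.card V)
  page : G.edgeSet → Fin k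
  matching : ∀ e f : G.edgeSet, e ≠ f → page e = page f →
    ∀ v : V, v ∈ (e : Sym2 V) → v ∉ (f : Sym2 V)
  noncross : ∀ e f : G.edgeSet, page e = page f →
    ∀ a b c d : V, (e : Sym2 V) = s(a, b) → (f : Sym2 V) = s(c, d) →
      ord a < ord c → ord c < ord b → ord b < ord d → False

/-- The matching book thickness: the minimum number of pages over all matching
book embeddings. -/
noncomputable def mbt {V : Type*} [Fintype V] (G : SimpleGraph V) : ℕ :=
  sInf {k | Nonempty (MatchingBookEmbedding G k)}

/-!
In a `k`-page matching book embedding of a `k`-regular graph every page is a perfect matching.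
For an edge `ab`, its page matches the vertices strictly between `a` and `b` among themselves,
since an edge leaving that interval would cross `ab`. So there are evenly many of them, adjacent
vertices sit at spine positions of different parity, and that parity is a proper 2-colouring.
-/

theorem Finset.even_card_of_involution {α : Type*} {s : Finset α} (f : α → α)
    (hmem : ∀ x ∈ s, f x ∈ s) (hne : ∀ x ∈ s, f x ≠ x) (hinv : ∀ x ∈ s, f (f x) = x) :
    Even s.card := by
  have hsum : ∑ _x ∈ s, (1 : ZMod 2) = 0 :=
    Finset.sum_involution (fun x _ => f x) (fun _ _ => by decide) (fun x hx _ => hne x hx)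
      hmem hinv
  rwa [Finset.sum_const, nsmul_one, ZMod.natCast_eq_zero_iff_even] at hsum

namespace MatchingBookEmbedding

variable {V : Type*} [Fintype V] {G : SimpleGraph V} {k : ℕ} (B : MatchingBookEmbedding G k)

def edgePage {u v : V} (h : G.Adj u v) : Fin k := B.page ⟨s(u, v), h⟩

theorem edgePage_symm {u v : V} (h : G.Adj u v) : B.edgePage h.symm = B.edgePage h := by
  simp only [edgePage, Sym2.eq_swap]

theorem eq_of_edgePage_eq {v u₁ u₂ : V} (h₁ : G.Adj v u₁) (h₂ : G.Adj v u₂)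
    (hp : B.edgePage h₁ = B.edgePage h₂) : u₁ = u₂ := by
  by_contra hne
  have hef : (⟨s(v, u₁), h₁⟩ : G.edgeSet) ≠ ⟨s(v, u₂), h₂⟩ := fun h =>
    hne (Sym2.congr_right.mp (congrArg Subtype.val h))
  exact B.matching _ _ hef hp v (Sym2.mem_mk_left v u₁) (Sym2.mem_mk_left v u₂)

theorem exists_edgePage_eq [DecidableRel G.Adj] {v : V} (hv : G.degree v = k) (p : Fin k) :
    ∃ u, ∃ h : G.Adj v u, B.edgePage h = p := by
  let φ : G.neighborSet v → Fin k := fun u => B.edgePage u.2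
  have hinj : Function.Injective φ := fun u₁ u₂ h =>
    Subtype.ext (B.eq_of_edgePage_eq u₁.2 u₂.2 h)
  have hcard : Fintype.card (G.neighborSet v) = Fintype.card (Fin k) := by
    rw [G.card_neighborSet_eq_degree, hv, Fintype.card_fin]
  obtain ⟨u, hu⟩ := ((Fintype.bijective_iff_injective_and_card φ).mpr ⟨hinj, hcard⟩).2 p
  exact ⟨u, u.2, hu⟩

theorem mem_Ioo_of_edgePage_eq {a b v w : V} (hab : G.Adj a b) (hvw : G.Adj v w)
    (hp : B.edgePage hab = B.edgePage hvw) (hv : B.ord v ∈ Set.Ioo (B.ord a) (B.ord b)) :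
    B.ord w ∈ Set.Ioo (B.ord a) (B.ord b) := by
  obtain ⟨hav, hvb⟩ := hv
  have hwa : w ≠ a := by
    rintro rfl
    exact hvb.ne (congrArg B.ord
      (B.eq_of_edgePage_eq hvw.symm hab ((B.edgePage_symm hvw).trans hp.symm)))
  have hwb : w ≠ b := by
    rintro rfl
    exact hav.ne' (congrArg B.ord (B.eq_of_edgePage_eq hvw.symm hab.symm
      ((B.edgePage_symm hvw).trans (hp.symm.trans (B.edgePage_symm hab).symm))))
  rcases (B.ord.injective.ne hwa).lt_or_gt with hlt | hgt
  · exact (B.noncross _ _ ((B.edgePage_symm hvw).trans hp.symm) w v a b rfl rfl hlt hav hvb).elim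
  rcases (B.ord.injective.ne hwb).lt_or_gt with hlt | hgt'
  · exact ⟨hgt, hlt⟩
  · exact (B.noncross _ _ hp a b v w rfl rfl hav hvb hgt').elim

theorem even_card_Ioo_of_adj [DecidableRel G.Adj] (hreg : G.IsRegularOfDegree k) {a b : V}
    (hab : G.Adj a b) : Even (Finset.Ioo (B.ord a) (B.ord b)).card := by
  choose partner hpartner hpage using fun v => B.exists_edgePage_eq (hreg v) (B.edgePage hab)
  rw [← Finset.card_map B.ord.symm.toEmbedding]
  refine Finset.even_card_of_involution partner (fun v hv => ?_) (fun v _ => (hpartner v).ne')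
    (fun v _ => ?_)
  · simp only [Finset.mem_map_equiv, Equiv.symm_symm, Finset.mem_Ioo] at hv ⊢
    exact B.mem_Ioo_of_edgePage_eq hab (hpartner v) (hpage v).symm hv
  · exact B.eq_of_edgePage_eq (hpartner _) (hpartner v).symm
      ((hpage _).trans ((B.edgePage_symm _).trans (hpage v)).symm)

theorem ord_mod_two_ne_of_adj [DecidableRel G.Adj] (hreg : G.IsRegularOfDegree k) {a b : V}
    (hab : G.Adj a b) : (B.ord a : ℕ) % 2 ≠ (B.ord b : ℕ) % 2 := by
  wlog hlt : B.ord a < B.ord b generalizing a b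
  · exact fun h => this hab.symm
      ((B.ord.injective.ne hab.ne).symm.lt_of_le (not_lt.mp hlt)) h.symm
  have heven := B.even_card_Ioo_of_adj hreg hab
  rw [Fin.card_Ioo] at heven
  have : (B.ord a : ℕ) < B.ord b := hlt
  rcases heven with ⟨m, hm⟩
  omega

theorem colorable_two (B : MatchingBookEmbedding G k) [DecidableRel G.Adj]
    (hreg : G.IsRegularOfDegree k) : G.Colorable 2 :=
  ⟨Coloring.mk (fun v => ⟨(B.ord v : ℕ) % 2, Nat.mod_lt _ two_pos⟩) fun hab h =>
    B.ord_mod_two_ne_of_adj hreg hab (congrArg Fin.val h)⟩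

end MatchingBookEmbedding

theorem nonempty_matchingBookEmbedding_of_mbt_eq {V : Type*} [Fintype V] {G : SimpleGraph V}
    {k : ℕ} (hmbt : mbt G = k) (hk : 0 < k) : Nonempty (MatchingBookEmbedding G k) := by
  have hne : {m | Nonempty (MatchingBookEmbedding G m)}.Nonempty := by
    by_contra h
    rw [Set.not_nonempty_iff_eq_empty] at h
    rw [mbt, h, Nat.sInf_empty] at hmbt
    omega
  exact hmbt ▸ Nat.sInf_mem hne

/-- A regular dispersable graph is bipartite. -/
theorem stmt_2 {V : Type*} [Fintype V] (G : SimpleGraph V) [DecidableRel G.Adj]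
    (k : ℕ) (hreg : G.IsRegularOfDegree k)
    (hdisp : mbt G = G.maxDegree) (hk : G.maxDegree = k) :
    G.Colorable 2 := by
  rcases Nat.eq_zero_or_pos k with rfl | hkpos
  · refine ⟨Coloring.mk (fun _ => 0) fun {a b} hab _ => ?_⟩
    have := (G.degree_pos_iff_exists_adj a).mpr ⟨b, hab⟩
    rw [hreg a] at this
    exact this.false
  · obtain ⟨B⟩ := nonempty_matchingBookEmbedding_of_mbt_eq (hdisp.trans hk) hkpos
    exact B.colorable_two hreg
end

section
/- For any graph G and any dispersable bipartite graph B, the matching book thickness of the Cartesian product satisfies mbt(G □ B) ≤ mbt(G) + Δ(B). -/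
open SimpleGraph
open scoped Classical

namespace MBTAux

variable {V W : Type*} [Fintype V] [Fintype W]

lemma exists_embedding (G : SimpleGraph V) :
    Nonempty (MatchingBookEmbedding G (Fintype.card G.edgeSet)) := by
  refine ⟨⟨Fintype.equivFin V, Fintype.equivFin G.edgeSet, ?_, ?_⟩⟩
  · intro e f hne hpage
    exact absurd ((Fintype.equivFin G.edgeSet).injective hpage) hne
  · intro e f hpage a b c d he hf h1 h2 h3
    have hef : e = f := (Fintype.equivFin G.edgeSet).injective hpage
    subst hef
    rw [he] at hf
    rcases Sym2.eq_iff.mp hf with ⟨rfl, rfl⟩ | ⟨rfl, rfl⟩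
    · exact lt_irrefl _ h1
    · exact lt_irrefl _ h2

lemma mbt_mem (G : SimpleGraph V) : Nonempty (MatchingBookEmbedding G (mbt G)) := by
  have h : mbt G ∈ {k | Nonempty (MatchingBookEmbedding G k)} :=
    Nat.sInf_mem ⟨_, exists_embedding G⟩
  exact h

section Construction

variable {G : SimpleGraph V} {B : SimpleGraph W} {kG kB : ℕ}
variable (EG : MatchingBookEmbedding G kG) (EB : MatchingBookEmbedding B kB)
variable (C : B.Coloring (Fin 2))

/-- position within a block -/
noncomputable def gv (p : V × W) : ℕ :=
  if C p.2 = 0 then (EG.ord p.1 : ℕ) else Fintype.card V - 1 - (EG.ord p.1 : ℕ)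

/-- global spine position -/
noncomputable def fv (p : V × W) : ℕ :=
  Fintype.card V * (EB.ord p.2 : ℕ) + gv EG C p

lemma gv_lt (p : V × W) : gv EG C p < Fintype.card V := by
  have h1 : (EG.ord p.1 : ℕ) < Fintype.card V := (EG.ord p.1).isLt
  unfold gv; split <;> omega

lemma fv_lt_of_block_lt {p q : V × W} (h : (EB.ord p.2 : ℕ) < (EB.ord q.2 : ℕ)) :
    fv EG EB C p < fv EG EB C q := by
  have h1 := gv_lt EG C p
  have h2 : Fintype.card V * ((EB.ord p.2 : ℕ) + 1) ≤ Fintype.card V * (EB.ord q.2 : ℕ) :=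
    Nat.mul_le_mul_left _ h
  rw [Nat.mul_add, Nat.mul_one] at h2
  unfold fv
  have := Nat.zero_le (gv EG C q)
  linarith

lemma block_le_of_fv_lt {p q : V × W} (h : fv EG EB C p < fv EG EB C q) :
    (EB.ord p.2 : ℕ) ≤ (EB.ord q.2 : ℕ) := by
  by_contra h'
  push_neg at h'
  exact absurd h (not_lt_of_gt (fv_lt_of_block_lt EG EB C h'))

lemma fv_lt_same {p q : V × W} (h : p.2 = q.2) :
    fv EG EB C p < fv EG EB C q ↔ gv EG C p < gv EG C q := by
  unfold fv
  rw [h]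
  exact Nat.add_lt_add_iff_left

lemma fv_inj : Function.Injective (fv EG EB C) := by
  intro p q h
  have hb : (EB.ord p.2 : ℕ) = (EB.ord q.2 : ℕ) := by
    rcases lt_trichotomy (EB.ord p.2 : ℕ) (EB.ord q.2 : ℕ) with h1 | h1 | h1
    · exact absurd h (fv_lt_of_block_lt EG EB C h1).ne
    · exact h1
    · exact absurd h.symm (fv_lt_of_block_lt EG EB C h1).ne
  have hw : p.2 = q.2 := EB.ord.injective (Fin.ext hb)
  have hg : gv EG C p = gv EG C q := by
    unfold fv at h
    rw [hw] at h
    exact Nat.add_left_cancel h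
  have h1 : (EG.ord p.1 : ℕ) < Fintype.card V := (EG.ord p.1).isLt
  have h2 : (EG.ord q.1 : ℕ) < Fintype.card V := (EG.ord q.1).isLt
  have hv : p.1 = q.1 := by
    unfold gv at hg
    rw [hw] at hg
    apply EG.ord.injective
    apply Fin.ext
    split_ifs at hg with hc
    · exact hg
    · omega
  exact Prod.ext hv hw

lemma fv_lt_card (p : V × W) : fv EG EB C p < Fintype.card (V × W) := by
  rw [Fintype.card_prod]
  have h1 := gv_lt EG C p
  have h2 : (EB.ord p.2 : ℕ) + 1 ≤ Fintype.card W := (EB.ord p.2).isLt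
  have h3 : Fintype.card V * ((EB.ord p.2 : ℕ) + 1) ≤ Fintype.card V * Fintype.card W :=
    Nat.mul_le_mul_left _ h2
  rw [Nat.mul_add, Nat.mul_one] at h3
  unfold fv
  linarith

/-- The spine of the product embedding. -/
noncomputable def spine : (V × W) ≃ Fin (Fintype.card (V × W)) :=
  Equiv.ofBijective (fun p => (⟨fv EG EB C p, fv_lt_card EG EB C p⟩ : Fin _))
    ((Fintype.bijective_iff_injective_and_card _).mpr
      ⟨fun p q h => fv_inj EG EB C (congrArg Fin.val h), (Fintype.card_fin _).symm⟩)

lemma spine_lt_iff (p q : V × W) :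
    spine EG EB C p < spine EG EB C q ↔ fv EG EB C p < fv EG EB C q := Iff.rfl

lemma box_cases {e : Sym2 (V × W)} (he : e ∈ (G □ B).edgeSet) :
    (∃ v₁ v₂ w, G.Adj v₁ v₂ ∧ e = s((v₁, w), (v₂, w))) ∨
    (∃ v w₁ w₂, B.Adj w₁ w₂ ∧ e = s((v, w₁), (v, w₂))) := by
  induction e using Sym2.ind with
  | _ x y =>
    rw [SimpleGraph.mem_edgeSet, SimpleGraph.boxProd_adj] at he
    obtain ⟨x1, x2⟩ := x
    obtain ⟨y1, y2⟩ := y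
    rcases he with ⟨h, h2⟩ | ⟨h, h2⟩
    · simp only at h h2
      subst h2
      exact Or.inl ⟨x1, y1, x2, h, rfl⟩
    · simp only at h h2
      subst h2
      exact Or.inr ⟨x1, x2, y2, h, rfl⟩

lemma G_form {e : Sym2 (V × W)} (he : e ∈ (G □ B).edgeSet)
    (h : (Sym2.map Prod.snd e).IsDiag) :
    ∃ v₁ v₂ w, G.Adj v₁ v₂ ∧ e = s((v₁, w), (v₂, w)) := by
  rcases box_cases he with hc | ⟨v, w₁, w₂, hadj, rfl⟩
  · exact hc
  · rw [Sym2.map_pair_eq] at h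
    exact absurd (Sym2.mk_isDiag_iff.mp h) hadj.ne

lemma B_form {e : Sym2 (V × W)} (he : e ∈ (G □ B).edgeSet)
    (h : ¬ (Sym2.map Prod.snd e).IsDiag) :
    ∃ v w₁ w₂, B.Adj w₁ w₂ ∧ e = s((v, w₁), (v, w₂)) := by
  rcases box_cases he with ⟨v₁, v₂, w, hadj, rfl⟩ | hc
  · rw [Sym2.map_pair_eq] at h
    exact absurd (Sym2.mk_isDiag_iff.mpr rfl) h
  · exact hc

lemma pG_mem {e : Sym2 (V × W)} (he : e ∈ (G □ B).edgeSet)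
    (h : (Sym2.map Prod.snd e).IsDiag) : Sym2.map Prod.fst e ∈ G.edgeSet := by
  obtain ⟨v₁, v₂, w, hadj, rfl⟩ := G_form he h
  rw [Sym2.map_pair_eq]
  exact hadj

lemma pB_mem {e : Sym2 (V × W)} (he : e ∈ (G □ B).edgeSet)
    (h : ¬ (Sym2.map Prod.snd e).IsDiag) : Sym2.map Prod.snd e ∈ B.edgeSet := by
  obtain ⟨v, w₁, w₂, hadj, rfl⟩ := B_form he h
  rw [Sym2.map_pair_eq]
  exact hadj

/-- The page assignment of the product embedding. -/
noncomputable def pageMap (e : (G □ B).edgeSet) : Fin (kG + kB) :=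
  if h : (Sym2.map Prod.snd (e : Sym2 (V × W))).IsDiag then
    Fin.castAdd kB (EG.page ⟨Sym2.map Prod.fst (e : Sym2 (V × W)), pG_mem e.2 h⟩)
  else
    Fin.natAdd kG (EB.page ⟨Sym2.map Prod.snd (e : Sym2 (V × W)), pB_mem e.2 h⟩)

lemma castAdd_ne_natAdd (i : Fin kG) (j : Fin kB) :
    Fin.castAdd kB i ≠ Fin.natAdd kG j := by
  intro h
  have h1 : (i : ℕ) = kG + (j : ℕ) := congrArg Fin.val h
  have := i.isLt
  omega

lemma fin2_cases (x : Fin 2) : x = 0 ∨ x = 1 := by omega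

include EG EB C in
lemma box_nonempty : Nonempty (MatchingBookEmbedding (G □ B) (kG + kB)) := by
  refine ⟨⟨spine EG EB C, pageMap EG EB, ?_, ?_⟩⟩
  · -- matching
    intro e f hne hpage x hxe hxf
    by_cases hde : (Sym2.map Prod.snd (e : Sym2 (V × W))).IsDiag <;>
      by_cases hdf : (Sym2.map Prod.snd (f : Sym2 (V × W))).IsDiag <;>
      unfold pageMap at hpage
    · -- both G-type
      rw [dif_pos hde, dif_pos hdf] at hpage
      have hval := congrArg Fin.val hpage
      rw [Fin.coe_castAdd, Fin.coe_castAdd] at hval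
      have hp : EG.page ⟨_, pG_mem e.2 hde⟩ = EG.page ⟨_, pG_mem f.2 hdf⟩ :=
        Fin.ext hval
      by_cases hEF : (Sym2.map Prod.fst (e : Sym2 (V × W))) =
          (Sym2.map Prod.fst (f : Sym2 (V × W)))
      · -- same underlying G-edge: then e = f, contradiction
        obtain ⟨a₁, a₂, w, hG, heq⟩ := G_form e.2 hde
        obtain ⟨c₁, c₂, w', hG', hfeq⟩ := G_form f.2 hdf
        have hw : w = w' := by
          rw [heq, Sym2.mem_iff] at hxe
          rw [hfeq, Sym2.mem_iff] at hxf
          rcases hxe with rfl | rfl <;> rcases hxf with h | h <;>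
            exact congrArg Prod.snd h
        subst hw
        rw [heq, hfeq, Sym2.map_pair_eq, Sym2.map_pair_eq] at hEF
        apply hne
        apply Subtype.ext
        rw [heq, hfeq]
        rcases Sym2.eq_iff.mp hEF with ⟨rfl, rfl⟩ | ⟨rfl, rfl⟩
        · rfl
        · exact Sym2.eq_swap
      · have hne' : (⟨_, pG_mem e.2 hde⟩ : G.edgeSet) ≠ ⟨_, pG_mem f.2 hdf⟩ :=
          fun h => hEF (congrArg Subtype.val h)
        exact EG.matching _ _ hne' hp x.1 (Sym2.mem_map.mpr ⟨x, hxe, rfl⟩)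
          (Sym2.mem_map.mpr ⟨x, hxf, rfl⟩)
    · rw [dif_pos hde, dif_neg hdf] at hpage
      exact castAdd_ne_natAdd _ _ hpage
    · rw [dif_neg hde, dif_pos hdf] at hpage
      exact castAdd_ne_natAdd _ _ hpage.symm
    · -- both B-type
      rw [dif_neg hde, dif_neg hdf] at hpage
      have hval := congrArg Fin.val hpage
      rw [Fin.coe_natAdd, Fin.coe_natAdd] at hval
      have hp : EB.page ⟨_, pB_mem e.2 hde⟩ = EB.page ⟨_, pB_mem f.2 hdf⟩ :=
        Fin.ext (by omega)
      by_cases hEF : (Sym2.map Prod.snd (e : Sym2 (V × W))) =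
          (Sym2.map Prod.snd (f : Sym2 (V × W)))
      · obtain ⟨v, w₁, w₂, hB, heq⟩ := B_form e.2 hde
        obtain ⟨v', w₃, w₄, hB', hfeq⟩ := B_form f.2 hdf
        have hv : v = v' := by
          rw [heq, Sym2.mem_iff] at hxe
          rw [hfeq, Sym2.mem_iff] at hxf
          rcases hxe with rfl | rfl <;> rcases hxf with h | h <;>
            exact congrArg Prod.fst h
        subst hv
        rw [heq, hfeq, Sym2.map_pair_eq, Sym2.map_pair_eq] at hEF
        apply hne
        apply Subtype.ext
        rw [heq, hfeq]
        rcases Sym2.eq_iff.mp hEF with ⟨rfl, rfl⟩ | ⟨rfl, rfl⟩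
        · rfl
        · exact Sym2.eq_swap
      · have hne' : (⟨_, pB_mem e.2 hde⟩ : B.edgeSet) ≠ ⟨_, pB_mem f.2 hdf⟩ :=
          fun h => hEF (congrArg Subtype.val h)
        exact EB.matching _ _ hne' hp x.2 (Sym2.mem_map.mpr ⟨x, hxe, rfl⟩)
          (Sym2.mem_map.mpr ⟨x, hxf, rfl⟩)
  · -- noncross
    intro e f hpage a b c d he hf h1 h2 h3
    rw [spine_lt_iff] at h1 h2 h3
    have hac := block_le_of_fv_lt EG EB C h1
    have hcb := block_le_of_fv_lt EG EB C h2
    have hbd := block_le_of_fv_lt EG EB C h3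
    by_cases hde : (Sym2.map Prod.snd (e : Sym2 (V × W))).IsDiag <;>
      by_cases hdf : (Sym2.map Prod.snd (f : Sym2 (V × W))).IsDiag <;>
      unfold pageMap at hpage
    · -- both G-type
      rw [dif_pos hde, dif_pos hdf] at hpage
      have hval := congrArg Fin.val hpage
      rw [Fin.coe_castAdd, Fin.coe_castAdd] at hval
      have hp : EG.page ⟨_, pG_mem e.2 hde⟩ = EG.page ⟨_, pG_mem f.2 hdf⟩ :=
        Fin.ext hval
      have hab2 : a.2 = b.2 := by
        rw [he, Sym2.map_pair_eq] at hde
        exact Sym2.mk_isDiag_iff.mp hde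
      have hcd2 : c.2 = d.2 := by
        rw [hf, Sym2.map_pair_eq] at hdf
        exact Sym2.mk_isDiag_iff.mp hdf
      have hca : c.2 = a.2 := by
        apply EB.ord.injective
        apply Fin.ext
        rw [← hab2] at hcb
        omega
      have hda : d.2 = a.2 := hcd2 ▸ hca
      have hba : b.2 = a.2 := hab2.symm
      have g1 : gv EG C a < gv EG C c := (fv_lt_same EG EB C hca.symm).mp h1
      have g2 : gv EG C c < gv EG C b := (fv_lt_same EG EB C (hca.trans hba.symm)).mp h2
      have g3 : gv EG C b < gv EG C d := (fv_lt_same EG EB C (hba.trans hda.symm)).mp h3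
      simp only [gv] at g1 g2 g3
      rw [hca] at g1 g2
      rw [hba] at g2 g3
      rw [hda] at g3
      have hea : (Sym2.map Prod.fst (e : Sym2 (V × W))) = s(a.1, b.1) := by
        rw [he, Sym2.map_pair_eq]
      have hfa : (Sym2.map Prod.fst (f : Sym2 (V × W))) = s(c.1, d.1) := by
        rw [hf, Sym2.map_pair_eq]
      have b1 : (EG.ord a.1 : ℕ) < Fintype.card V := (EG.ord a.1).isLt
      have b2 : (EG.ord b.1 : ℕ) < Fintype.card V := (EG.ord b.1).isLt
      have b3 : (EG.ord c.1 : ℕ) < Fintype.card V := (EG.ord c.1).isLt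
      have b4 : (EG.ord d.1 : ℕ) < Fintype.card V := (EG.ord d.1).isLt
      by_cases hC : C a.2 = 0
      · rw [if_pos hC] at g1 g2 g3
        rw [if_pos hC] at g1 g2 g3
        exact EG.noncross _ _ hp a.1 b.1 c.1 d.1 hea hfa
          (Fin.lt_def.mpr g1) (Fin.lt_def.mpr g2) (Fin.lt_def.mpr g3)
      · rw [if_neg hC] at g1 g2 g3
        rw [if_neg hC] at g1 g2 g3
        refine EG.noncross _ _ hp.symm d.1 c.1 b.1 a.1 ?_ ?_ ?_ ?_ ?_
        · show Sym2.map Prod.fst (f : Sym2 (V × W)) = s(d.1, c.1)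
          rw [hfa]; exact Sym2.eq_swap
        · show Sym2.map Prod.fst (e : Sym2 (V × W)) = s(b.1, a.1)
          rw [hea]; exact Sym2.eq_swap
        · exact Fin.lt_def.mpr (by omega)
        · exact Fin.lt_def.mpr (by omega)
        · exact Fin.lt_def.mpr (by omega)
    · rw [dif_pos hde, dif_neg hdf] at hpage
      exact castAdd_ne_natAdd _ _ hpage
    · rw [dif_neg hde, dif_pos hdf] at hpage
      exact castAdd_ne_natAdd _ _ hpage.symm
    · -- both B-type
      rw [dif_neg hde, dif_neg hdf] at hpage
      have hval := congrArg Fin.val hpage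
      rw [Fin.coe_natAdd, Fin.coe_natAdd] at hval
      have hp : EB.page ⟨_, pB_mem e.2 hde⟩ = EB.page ⟨_, pB_mem f.2 hdf⟩ :=
        Fin.ext (by omega)
      obtain ⟨v, w₁, w₂, hB, heq⟩ := B_form e.2 hde
      obtain ⟨v', w₃, w₄, hB', hfeq⟩ := B_form f.2 hdf
      rw [he] at heq
      rw [hf] at hfeq
      have hab : a.1 = b.1 ∧ B.Adj a.2 b.2 := by
        rcases Sym2.eq_iff.mp heq with ⟨rfl, rfl⟩ | ⟨rfl, rfl⟩
        · exact ⟨rfl, hB⟩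
        · exact ⟨rfl, hB.symm⟩
      have hcd : c.1 = d.1 ∧ B.Adj c.2 d.2 := by
        rcases Sym2.eq_iff.mp hfeq with ⟨rfl, rfl⟩ | ⟨rfl, rfl⟩
        · exact ⟨rfl, hB'⟩
        · exact ⟨rfl, hB'.symm⟩
      obtain ⟨hab1, habj⟩ := hab
      obtain ⟨hcd1, hcdj⟩ := hcd
      have hab2 : a.2 ≠ b.2 := habj.ne
      have hcd2 : c.2 ≠ d.2 := hcdj.ne
      have hCab : C a.2 ≠ C b.2 := C.valid habj
      have hβab : (EB.ord a.2 : ℕ) ≠ (EB.ord b.2 : ℕ) :=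
        fun h => hab2 (EB.ord.injective (Fin.ext h))
      have hβcd : (EB.ord c.2 : ℕ) ≠ (EB.ord d.2 : ℕ) :=
        fun h => hcd2 (EB.ord.injective (Fin.ext h))
      have hebv : (Sym2.map Prod.snd (e : Sym2 (V × W))) = s(a.2, b.2) := by
        rw [he, Sym2.map_pair_eq]
      have hfbv : (Sym2.map Prod.snd (f : Sym2 (V × W))) = s(c.2, d.2) := by
        rw [hf, Sym2.map_pair_eq]
      by_cases hEF : (Sym2.map Prod.snd (e : Sym2 (V × W))) =
          (Sym2.map Prod.snd (f : Sym2 (V × W)))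
      · -- same underlying B-edge
        rw [hebv, hfbv] at hEF
        rcases Sym2.eq_iff.mp hEF with ⟨h5, h6⟩ | ⟨h5, h6⟩
        · -- a.2 = c.2, b.2 = d.2 : nesting violated by orientation reversal
          have g1 : gv EG C a < gv EG C c := (fv_lt_same EG EB C h5).mp h1
          have g3 : gv EG C b < gv EG C d := (fv_lt_same EG EB C h6).mp h3
          simp only [gv] at g1 g3
          rw [← h5] at g1
          rw [← h6] at g3
          rw [← hab1] at g3
          rw [← hcd1] at g3
          have b1 : (EG.ord a.1 : ℕ) < Fintype.card V := (EG.ord a.1).isLt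
          have b3 : (EG.ord c.1 : ℕ) < Fintype.card V := (EG.ord c.1).isLt
          rcases fin2_cases (C a.2) with hC | hC <;>
            rcases fin2_cases (C b.2) with hC' | hC'
          · exact hCab (hC.trans hC'.symm)
          · have hC'' : ¬ C b.2 = 0 := by rw [hC']; exact one_ne_zero
            rw [if_pos hC, if_pos hC] at g1
            rw [if_neg hC'', if_neg hC''] at g3
            omega
          · have hC'' : ¬ C a.2 = 0 := by rw [hC]; exact one_ne_zero
            rw [if_neg hC'', if_neg hC''] at g1
            rw [if_pos hC', if_pos hC'] at g3
            omega
          · exact hCab (hC.trans hC'.symm)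
        · -- a.2 = d.2, b.2 = c.2 : block order contradiction
          have e1 : (EB.ord a.2 : ℕ) = (EB.ord d.2 : ℕ) := by rw [h5]
          have e2 : (EB.ord b.2 : ℕ) = (EB.ord c.2 : ℕ) := by rw [h6]
          omega
      · have hne' : (⟨_, pB_mem e.2 hde⟩ : B.edgeSet) ≠ ⟨_, pB_mem f.2 hdf⟩ :=
          fun h => hEF (congrArg Subtype.val h)
        have hmem : ∀ z : W, z ∈ s(a.2, b.2) → z ∈ s(c.2, d.2) → False := by
          intro z hz1 hz2
          refine EB.matching _ _ hne' hp z ?_ ?_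
          · show z ∈ Sym2.map Prod.snd (e : Sym2 (V × W))
            rw [hebv]; exact hz1
          · show z ∈ Sym2.map Prod.snd (f : Sym2 (V × W))
            rw [hfbv]; exact hz2
        rcases eq_or_lt_of_le hac with hq | hq
        · exact hmem a.2 (Sym2.mem_iff.mpr (Or.inl rfl))
            (Sym2.mem_iff.mpr (Or.inl (EB.ord.injective (Fin.ext hq))))
        · rcases eq_or_lt_of_le hcb with hq2 | hq2
          · exact hmem b.2 (Sym2.mem_iff.mpr (Or.inr rfl))
              (Sym2.mem_iff.mpr (Or.inl (EB.ord.injective (Fin.ext hq2)).symm))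
          · rcases eq_or_lt_of_le hbd with hq3 | hq3
            · exact hmem b.2 (Sym2.mem_iff.mpr (Or.inr rfl))
                (Sym2.mem_iff.mpr (Or.inr (EB.ord.injective (Fin.ext hq3))))
            · exact EB.noncross _ _ hp a.2 b.2 c.2 d.2 hebv hfbv
                (Fin.lt_def.mpr hq) (Fin.lt_def.mpr hq2) (Fin.lt_def.mpr hq3)

end Construction

end MBTAux

/-- For any graph `G` and any dispersable bipartite graph `B`,
`mbt (G □ B) ≤ mbt G + Δ(B)`. -/
theorem stmt_6 {V W : Type*} [Fintype V] [Fintype W]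
    (G : SimpleGraph V) (B : SimpleGraph W) [DecidableRel B.Adj]
    (hbip : B.Colorable 2) (hdisp : mbt B = B.maxDegree) :
    mbt (G □ B) ≤ mbt G + B.maxDegree := by
  obtain ⟨EG⟩ := MBTAux.mbt_mem G
  obtain ⟨EB⟩ := MBTAux.mbt_mem B
  rw [hdisp] at EB
  obtain ⟨C⟩ := hbip
  exact Nat.sInf_le (MBTAux.box_nonempty EG EB C)
end

section
/- For n, m ≥ 2, mbt(K_{2n+1} □ C_{2m}) = 2n + 3 = Δ(K_{2n+1} □ C_{2m}) + 1. -/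
open SimpleGraph
open scoped Classical

/-!
Lower bound. If a graph is regular of degree equal to the number `k` of pages, every vertex meets
every page. For an edge `uw` on page `p`, the page-`p` partner of a vertex strictly between `u`
and `w` on the spine is again strictly between them (its edge can neither cross nor share an end
with `uw`), so that interval has even size and `u`, `w` sit at spine positions of different parity.
Hence a `k`-regular graph with a `k`-page matching book embedding is bipartite. Since
`K_{2n+1} □ C_{2m}` is `(2n+2)`-regular and contains triangles, it needs `2n + 3` pages.

Upper bound. Lay the copies of `K_{2n+1}` along the spine one after the other, every second copy
reversed. Edges inside a copy keep the `2n + 1` pages `x + y mod (2n + 1)` of `K_{2n+1}`. An edge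
of the cycle joins mirror-image positions of two consecutive copies, so the cycle edges of one
colour class of the even cycle are nested or disjoint and fit on one extra page each.
-/

open Finset

theorem Finset.even_card_of_involution_s11 {α : Type*} (s : Finset α) (g : α → α)
    (g_ne : ∀ a ∈ s, g a ≠ a) (g_mem : ∀ a ∈ s, g a ∈ s)
    (g_inv : ∀ a ∈ s, g (g a) = a) : Even #s := by
  have h : ∑ _ ∈ s, (1 : ZMod 2) = 0 :=
    sum_involution (fun a _ => g a) (fun _ _ => by decide) (fun a ha _ => g_ne a ha) g_mem g_inv
  simpa [ZMod.natCast_eq_zero_iff_even] using h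

theorem SimpleGraph.IsRegularOfDegree.boxProd {α β : Type*} {G : SimpleGraph α}
    {H : SimpleGraph β} [G.LocallyFinite] [H.LocallyFinite] [(G □ H).LocallyFinite] {d e : ℕ}
    (hG : G.IsRegularOfDegree d) (hH : H.IsRegularOfDegree e) :
    (G □ H).IsRegularOfDegree (d + e) := fun x => by
  rw [degree_boxProd, hG.degree_eq, hH.degree_eq]

theorem SimpleGraph.cycleGraph_isRegularOfDegree_two {n : ℕ} (hn : 3 ≤ n) :
    (cycleGraph n).IsRegularOfDegree 2 := by
  obtain ⟨n, rfl⟩ : ∃ n', n = n' + 3 := ⟨n - 3, by omega⟩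
  exact fun _ => cycleGraph_degree_three_le

theorem SimpleGraph.cycleGraph_adj_val {n : ℕ} {i j : Fin n} (h : (cycleGraph n).Adj i j) :
    (i : ℕ) + 1 = j ∨ (j : ℕ) + 1 = i ∨ ((i : ℕ) = 0 ∧ (j : ℕ) + 1 = n) ∨
      ((j : ℕ) = 0 ∧ (i : ℕ) + 1 = n) := by
  have hsub (x y : Fin n) (hxy : ((x - y : Fin n) : ℕ) = 1) :
      (x : ℕ) = y + 1 ∨ ((x : ℕ) = 0 ∧ (y : ℕ) + 1 = n) := by
    rcases le_or_gt y x with hle | hlt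
    · rw [Fin.coe_sub_iff_le.mpr hle] at hxy
      omega
    · rw [Fin.coe_sub_iff_lt.mpr hlt] at hxy
      have := x.2
      omega
  rcases cycleGraph_adj'.mp h with h | h <;> rcases hsub _ _ h with h | h <;> omega

theorem SimpleGraph.not_colorable_top {N c : ℕ} (h : c < N) :
    ¬ (⊤ : SimpleGraph (Fin N)).Colorable c := fun hc => by
  have := hc.card_le_of_pairwise_adj id fun _ _ => id
  simp only [Nat.card_eq_fintype_card, Fintype.card_fin] at this
  omega

theorem SimpleGraph.not_colorable_boxProd {α β : Type*} {G : SimpleGraph α} {H : SimpleGraph β}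
    {c : ℕ} (hG : ¬ G.Colorable c) (b : β) : ¬ (G □ H).Colorable c :=
  fun h => hG (h.of_hom (boxProdLeft G H b).toHom)

def cycleEdgeColor (i j : ℕ) : ℕ := if i + 1 = j ∨ j + 1 = i then min i j % 2 else 1

theorem cycleEdgeColor_comm (i j : ℕ) : cycleEdgeColor i j = cycleEdgeColor j i := by
  simp only [cycleEdgeColor, min_comm, or_comm]

theorem cycleEdgeColor_lt_two (i j : ℕ) : cycleEdgeColor i j < 2 := by
  unfold cycleEdgeColor
  split_ifs <;> omega

theorem cycleEdgeColor_succ (i : ℕ) : cycleEdgeColor i (i + 1) = i % 2 := by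
  simp [cycleEdgeColor]

theorem cycleEdgeColor_zero_of_two_le {j : ℕ} (hj : 2 ≤ j) : cycleEdgeColor 0 j = 1 := by
  rw [cycleEdgeColor, if_neg (by omega)]

theorem eq_of_cycleEdgeColor_eq {m : ℕ} {v a b : Fin (2 * m)}
    (ha : (cycleGraph (2 * m)).Adj v a) (hb : (cycleGraph (2 * m)).Adj v b)
    (h : cycleEdgeColor v a = cycleEdgeColor v b) : a = b := by
  have := cycleGraph_adj_val ha
  have := cycleGraph_adj_val hb
  have := ha.ne
  have := hb.ne
  simp only [cycleEdgeColor, Fin.ext_iff] at *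
  split_ifs at h <;> omega

theorem not_modEq_of_interleaved {N a b c d : ℕ} (hd : d < N) (hac : a < c) (hcb : c < b)
    (hbd : b < d) : ¬ a + b ≡ c + d [MOD N] := fun h => by
  have := Nat.eq_zero_of_dvd_of_lt ((Nat.modEq_iff_dvd' (by omega)).mp h) (by omega)
  omega

def snakePos (N i a : ℕ) : ℕ := i * N + if i % 2 = 0 then a else N - 1 - a

theorem snakePos_lt_snakePos {N i j a b : ℕ} (ha : a < N) (hij : i < j) :
    snakePos N i a < snakePos N j b := by
  have := Nat.mul_le_mul_right N (Nat.succ_le_of_lt hij)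
  rw [Nat.succ_mul] at this
  unfold snakePos
  split_ifs <;> omega

theorem le_of_snakePos_lt {N i j a b : ℕ} (hb : b < N) (h : snakePos N i a < snakePos N j b) :
    i ≤ j :=
  not_lt.mp fun hji => (snakePos_lt_snakePos hb hji).not_gt h

theorem snakePos_lt_mul {N M i a : ℕ} (ha : a < N) (hi : i < M) : snakePos N i a < N * M := by
  have := Nat.mul_le_mul_right N (Nat.succ_le_of_lt hi)
  rw [Nat.succ_mul, mul_comm M] at this
  unfold snakePos
  split_ifs <;> omega

theorem snakePos_inj {N i j a b : ℕ} (ha : a < N) (hb : b < N)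
    (h : snakePos N i a = snakePos N j b) : i = j ∧ a = b := by
  obtain rfl : i = j := le_antisymm (not_lt.mp fun hji => (snakePos_lt_snakePos hb hji).ne' h)
    (not_lt.mp fun hij => (snakePos_lt_snakePos ha hij).ne h)
  unfold snakePos at h
  split_ifs at h <;> omega

theorem snakePos_lt_snakePos_iff {N i a b : ℕ} (ha : a < N) (hb : b < N) :
    snakePos N i a < snakePos N i b ↔ if i % 2 = 0 then a < b else b < a := by
  unfold snakePos
  split_ifs <;> omega

/-- The ends of a cycle edge `i — i'` sit at mirror-image positions of the blocks `i` and `i'`,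
so two cycle edges of the same colour are nested or disjoint. -/
theorem snakePos_not_crossing_of_cycle_edges {N m i i' j j' a c : ℕ} (ha : a < N) (hc : c < N)
    (hj' : j' < 2 * m) (hi : i' = i + 1 ∨ (i = 0 ∧ i' + 1 = 2 * m))
    (hj : j' = j + 1 ∨ (j = 0 ∧ j' + 1 = 2 * m))
    (hcolor : cycleEdgeColor i i' = cycleEdgeColor j j')
    (h1 : snakePos N i a < snakePos N j c) (h2 : snakePos N j c < snakePos N i' a)
    (h3 : snakePos N i' a < snakePos N j' c) : False := by
  have hij := le_of_snakePos_lt hc h1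
  have hji' := le_of_snakePos_lt ha h2
  have hi'j' := le_of_snakePos_lt hc h3
  replace hi : i' = i + 1 ∨ (i = 0 ∧ i' + 1 = 2 * m ∧ 2 ≤ i') := by omega
  replace hj : j' = j + 1 ∨ (j = 0 ∧ j' + 1 = 2 * m ∧ 2 ≤ j') := by omega
  rcases hi with rfl | ⟨rfl, hi⟩ <;> rcases hj with rfl | ⟨rfl, hj⟩
  · obtain rfl : j = i := by
      rw [cycleEdgeColor_succ, cycleEdgeColor_succ] at hcolor
      omega
    unfold snakePos at h1 h2 h3
    rw [Nat.succ_mul] at h2 h3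
    split_ifs at h1 h2 h3 <;> omega
  · rw [cycleEdgeColor_succ, cycleEdgeColor_zero_of_two_le hj.2] at hcolor
    omega
  · rw [cycleEdgeColor_succ, cycleEdgeColor_zero_of_two_le hi.2] at hcolor
    omega
  · obtain rfl : j' = i' := by omega
    unfold snakePos at h1 h2 h3
    split_ifs at h1 h2 h3 <;> omega

theorem mbt_eq {V : Type*} [Fintype V] {G : SimpleGraph V} {k : ℕ}
    (B : MatchingBookEmbedding G k) (hmin : ∀ j, MatchingBookEmbedding G j → k ≤ j) :
    mbt G = k :=
  le_antisymm (Nat.sInf_le ⟨B⟩) (le_csInf ⟨k, ⟨B⟩⟩ fun j ⟨B'⟩ => hmin j B')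

namespace MatchingBookEmbedding

variable {V : Type*} [Fintype V] {G : SimpleGraph V} {k : ℕ}

noncomputable def ofPosition (pos : V → ℕ) (pos_injective : Function.Injective pos)
    (pos_lt : ∀ v, pos v < Fintype.card V) (page : G.edgeSet → Fin k)
    (page_injective : ∀ ⦃v a b : V⦄ (ha : G.Adj v a) (hb : G.Adj v b),
      page ⟨s(v, a), ha⟩ = page ⟨s(v, b), hb⟩ → a = b)
    (not_crossing : ∀ ⦃a b c d : V⦄ (hab : G.Adj a b) (hcd : G.Adj c d),
      page ⟨s(a, b), hab⟩ = page ⟨s(c, d), hcd⟩ → pos a < pos c → pos c < pos b →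
        pos b < pos d → False) :
    MatchingBookEmbedding G k where
  ord := Equiv.ofBijective (fun v => ⟨pos v, pos_lt v⟩)
    ((Fintype.bijective_iff_injective_and_card _).2
      ⟨fun v w h => pos_injective (congrArg Fin.val h), by simp⟩)
  page := page
  matching := by
    rintro ⟨e, he⟩ ⟨f, hf⟩ hef hp v hve hvf
    obtain ⟨a, rfl⟩ := Sym2.mem_iff_exists.mp hve
    obtain ⟨b, rfl⟩ := Sym2.mem_iff_exists.mp hvf
    obtain rfl := page_injective he hf hp
    exact hef rfl
  noncross := by
    rintro ⟨e, he⟩ ⟨f, hf⟩ hp a b c d rfl rfl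
    exact not_crossing he hf hp

theorem page_swap (B : MatchingBookEmbedding G k) {a b : V} (h : G.Adj a b) :
    B.page ⟨s(b, a), h.symm⟩ = B.page ⟨s(a, b), h⟩ :=
  congrArg B.page (Subtype.ext Sym2.eq_swap)

theorem eq_of_page_eq (B : MatchingBookEmbedding G k) {v a b : V} (ha : G.Adj v a)
    (hb : G.Adj v b) (h : B.page ⟨s(v, a), ha⟩ = B.page ⟨s(v, b), hb⟩) : a = b := by
  by_contra hab
  refine B.matching _ _ (fun he => hab ?_) h v (Sym2.mem_mk_left _ _) (Sym2.mem_mk_left _ _)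
  exact Sym2.congr_right.mp (congrArg Subtype.val he)

section Lower

def pageAt (B : MatchingBookEmbedding G k) (v : V) (w : G.neighborSet v) : Fin k :=
  B.page ⟨s(v, w), w.2⟩

theorem pageAt_injective (B : MatchingBookEmbedding G k) (v : V) :
    Function.Injective (B.pageAt v) :=
  fun a b h => Subtype.ext (B.eq_of_page_eq a.2 b.2 h)

theorem degree_le [G.LocallyFinite] (B : MatchingBookEmbedding G k) (v : V) : G.degree v ≤ k := by
  have := Fintype.card_le_of_injective _ (B.pageAt_injective v)
  rwa [card_neighborSet_eq_degree, Fintype.card_fin] at this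

theorem exists_adj_page_eq [G.LocallyFinite] (B : MatchingBookEmbedding G k) {v : V}
    (hv : G.degree v = k) (p : Fin k) : ∃ w, ∃ h : G.Adj v w, B.page ⟨s(v, w), h⟩ = p := by
  have hbij : Function.Bijective (B.pageAt v) :=
    (Fintype.bijective_iff_injective_and_card _).2
      ⟨B.pageAt_injective v, by rw [card_neighborSet_eq_degree, hv, Fintype.card_fin]⟩
  obtain ⟨w, hw⟩ := hbij.2 p
  exact ⟨w, w.2, hw⟩

theorem between_of_page_eq (B : MatchingBookEmbedding G k) {u w t s : V} (huw : G.Adj u w)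
    (hts : G.Adj t s) (hp : B.page ⟨s(t, s), hts⟩ = B.page ⟨s(u, w), huw⟩)
    (hut : B.ord u < B.ord t) (htw : B.ord t < B.ord w) :
    B.ord u < B.ord s ∧ B.ord s < B.ord w := by
  have hsu : s ≠ u := by
    rintro rfl
    have := B.eq_of_page_eq huw hts.symm ((B.page_swap hts).trans hp).symm
    exact htw.ne (congrArg B.ord this).symm
  have hsw : s ≠ w := by
    rintro rfl
    have := B.eq_of_page_eq huw.symm hts.symm
      (((B.page_swap hts).trans hp).trans (B.page_swap huw).symm).symm
    exact hut.ne (congrArg B.ord this)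
  refine ⟨lt_of_le_of_ne (not_lt.mp fun hsu' => ?_) (B.ord.injective.ne hsu.symm),
    lt_of_le_of_ne (not_lt.mp fun hws => ?_) (B.ord.injective.ne hsw)⟩
  · exact B.noncross _ _ hp s t u w Sym2.eq_swap rfl hsu' hut htw
  · exact B.noncross _ _ hp.symm u w t s rfl rfl hut htw hws

theorem even_card_between [G.LocallyFinite] (B : MatchingBookEmbedding G k)
    (hG : G.IsRegularOfDegree k) {u w : V} (huw : G.Adj u w) :
    Even #{t | B.ord u < B.ord t ∧ B.ord t < B.ord w} := by
  choose partner hadj hpage using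
    fun t => B.exists_adj_page_eq (hG.degree_eq t) (B.page ⟨s(u, w), huw⟩)
  refine Finset.even_card_of_involution_s11 _ partner (fun t _ => (hadj t).ne.symm) ?_ ?_
  · intro t ht
    simp only [Finset.mem_filter, Finset.mem_univ, true_and] at ht ⊢
    exact B.between_of_page_eq huw (hadj t) (hpage t) ht.1 ht.2
  · intro t _
    exact B.eq_of_page_eq (hadj (partner t)) (hadj t).symm
      ((hpage _).trans ((B.page_swap (hadj t)).trans (hpage t)).symm)

theorem ord_mod_two_ne [G.LocallyFinite] (B : MatchingBookEmbedding G k)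
    (hG : G.IsRegularOfDegree k) {u w : V} (huw : G.Adj u w) :
    (B.ord u : ℕ) % 2 ≠ (B.ord w : ℕ) % 2 := by
  wlog hlt : B.ord u < B.ord w generalizing u w
  · exact (this huw.symm (lt_of_le_of_ne (not_lt.mp hlt) (B.ord.injective.ne huw.ne.symm))).symm
  have hcard : #{t | B.ord u < B.ord t ∧ B.ord t < B.ord w} = (B.ord w : ℕ) - B.ord u - 1 := by
    rw [Finset.card_equiv B.ord (t := Finset.Ioo (B.ord u) (B.ord w)) (by simp), Fin.card_Ioo]
  obtain ⟨c, hc⟩ := hcard ▸ B.even_card_between hG huw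
  have : (B.ord u : ℕ) < B.ord w := hlt
  omega

theorem colorable_two_of_isRegularOfDegree [G.LocallyFinite] (B : MatchingBookEmbedding G k)
    (hG : G.IsRegularOfDegree k) : G.Colorable 2 :=
  ⟨Coloring.mk (fun v => ⟨(B.ord v : ℕ) % 2, Nat.mod_lt _ two_pos⟩)
    fun h he => B.ord_mod_two_ne hG h (congrArg Fin.val he)⟩

theorem lt_of_isRegularOfDegree [G.LocallyFinite] [Nonempty V] (B : MatchingBookEmbedding G k)
    {d : ℕ} (hG : G.IsRegularOfDegree d) (hc : ¬ G.Colorable 2) : d < k := by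
  obtain ⟨v⟩ := ‹Nonempty V›
  refine lt_of_le_of_ne (hG.degree_eq v ▸ B.degree_le v) ?_
  rintro rfl
  exact hc (B.colorable_two_of_isRegularOfDegree hG)

end Lower

section Upper

noncomputable def top (N : ℕ) : MatchingBookEmbedding (⊤ : SimpleGraph (Fin N)) N :=
  ofPosition Fin.val Fin.val_injective (fun v => by simp)
    (fun e => Sym2.lift ⟨(· + ·), add_comm⟩ e.1) (fun _ _ _ _ _ h => add_left_cancel h)
    (fun a b c d _ _ h hac hcb hbd => not_modEq_of_interleaved d.2 hac hcb hbd
      (by simpa [Nat.ModEq, Fin.ext_iff, Fin.val_add] using h))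

variable {m : ℕ}

def boxCyclePos (B : MatchingBookEmbedding G k) (x : V × Fin (2 * m)) : ℕ :=
  snakePos (Fintype.card V) x.2 (B.ord x.1)

noncomputable def boxCyclePage (B : MatchingBookEmbedding G k) (x y : V × Fin (2 * m)) :
    Fin (k + 2) :=
  if h : G.Adj x.1 y.1 then Fin.castAdd 2 (B.page ⟨s(x.1, y.1), h⟩)
  else ⟨k + cycleEdgeColor x.2 y.2, by have := cycleEdgeColor_lt_two x.2 y.2; omega⟩

theorem boxCyclePage_comm (B : MatchingBookEmbedding G k) (x y : V × Fin (2 * m)) :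
    B.boxCyclePage x y = B.boxCyclePage y x := by
  unfold boxCyclePage
  by_cases h : G.Adj x.1 y.1
  · rw [dif_pos h, dif_pos h.symm]
    exact congrArg _ (B.page_swap h).symm
  · rw [dif_neg h, dif_neg (fun h' => h h'.symm), Fin.mk.injEq, cycleEdgeColor_comm]

theorem boxCyclePage_eq_castAdd (B : MatchingBookEmbedding G k) {x y : V × Fin (2 * m)}
    (h : G.Adj x.1 y.1) : B.boxCyclePage x y = Fin.castAdd 2 (B.page ⟨s(x.1, y.1), h⟩) :=
  dif_pos h

theorem boxCyclePage_val_of_eq (B : MatchingBookEmbedding G k) {x y : V × Fin (2 * m)}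
    (h : x.1 = y.1) : (B.boxCyclePage x y : ℕ) = k + cycleEdgeColor x.2 y.2 := by
  rw [boxCyclePage, dif_neg (by rw [h]; exact G.irrefl)]

theorem boxCyclePage_ne (B : MatchingBookEmbedding G k) {x y z w : V × Fin (2 * m)}
    (hxy : G.Adj x.1 y.1) (hzw : z.1 = w.1) : B.boxCyclePage x y ≠ B.boxCyclePage z w := by
  intro h
  have := congrArg Fin.val h
  rw [B.boxCyclePage_eq_castAdd hxy, Fin.val_castAdd, B.boxCyclePage_val_of_eq hzw] at this
  omega

theorem eq_of_boxCyclePage_eq (B : MatchingBookEmbedding G k) {v a b : V × Fin (2 * m)}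
    (ha : (G □ cycleGraph (2 * m)).Adj v a) (hb : (G □ cycleGraph (2 * m)).Adj v b)
    (h : B.boxCyclePage v a = B.boxCyclePage v b) : a = b := by
  rcases boxProd_adj.mp ha with ⟨ha1, ha2⟩ | ⟨ha2, ha1⟩ <;>
    rcases boxProd_adj.mp hb with ⟨hb1, hb2⟩ | ⟨hb2, hb1⟩
  · rw [B.boxCyclePage_eq_castAdd ha1, B.boxCyclePage_eq_castAdd hb1, Fin.castAdd_inj] at h
    exact Prod.ext (B.eq_of_page_eq ha1 hb1 h) (ha2.symm.trans hb2)
  · exact absurd h (B.boxCyclePage_ne ha1 hb1)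
  · exact absurd h.symm (B.boxCyclePage_ne hb1 ha1)
  · have := congrArg Fin.val h
    rw [B.boxCyclePage_val_of_eq ha1, B.boxCyclePage_val_of_eq hb1,
      Nat.add_left_cancel_iff] at this
    exact Prod.ext (ha1.symm.trans hb1) (eq_of_cycleEdgeColor_eq ha2 hb2 this)

theorem boxCyclePos_lt_boxCyclePos_iff (B : MatchingBookEmbedding G k) {x y : V × Fin (2 * m)}
    (h : x.2 = y.2) :
    B.boxCyclePos x < B.boxCyclePos y ↔
      if (x.2 : ℕ) % 2 = 0 then B.ord x.1 < B.ord y.1 else B.ord y.1 < B.ord x.1 := by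
  rw [boxCyclePos, boxCyclePos, h, snakePos_lt_snakePos_iff (B.ord x.1).2 (B.ord y.1).2]
  rfl

theorem boxCyclePage_not_crossing_of_adj (B : MatchingBookEmbedding G k)
    {a b c d : V × Fin (2 * m)} (hab : G.Adj a.1 b.1) (hab' : a.2 = b.2) (hcd : G.Adj c.1 d.1)
    (hcd' : c.2 = d.2) (h : B.boxCyclePage a b = B.boxCyclePage c d)
    (h1 : B.boxCyclePos a < B.boxCyclePos c) (h2 : B.boxCyclePos c < B.boxCyclePos b)
    (h3 : B.boxCyclePos b < B.boxCyclePos d) : False := by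
  rw [B.boxCyclePage_eq_castAdd hab, B.boxCyclePage_eq_castAdd hcd, Fin.castAdd_inj] at h
  have hac : a.2 = c.2 := by
    have := le_of_snakePos_lt (B.ord c.1).2 h1
    have := le_of_snakePos_lt (B.ord b.1).2 h2
    rw [← hab'] at this
    omega
  rw [B.boxCyclePos_lt_boxCyclePos_iff hac] at h1
  rw [B.boxCyclePos_lt_boxCyclePos_iff (hac.symm.trans hab'), ← hac] at h2
  rw [B.boxCyclePos_lt_boxCyclePos_iff (hab'.symm.trans (hac.trans hcd')), ← hab'] at h3
  split_ifs at h1 h2 h3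
  · exact B.noncross _ _ h a.1 b.1 c.1 d.1 rfl rfl h1 h2 h3
  · exact B.noncross _ _ h.symm d.1 c.1 b.1 a.1 Sym2.eq_swap Sym2.eq_swap h3 h2 h1

theorem boxCyclePage_not_crossing_of_eq (B : MatchingBookEmbedding G k)
    {a b c d : V × Fin (2 * m)} (hab : (cycleGraph (2 * m)).Adj a.2 b.2) (hab' : a.1 = b.1)
    (hcd : (cycleGraph (2 * m)).Adj c.2 d.2) (hcd' : c.1 = d.1)
    (h : B.boxCyclePage a b = B.boxCyclePage c d)
    (h1 : B.boxCyclePos a < B.boxCyclePos c) (h2 : B.boxCyclePos c < B.boxCyclePos b)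
    (h3 : B.boxCyclePos b < B.boxCyclePos d) : False := by
  have hcolor := congrArg Fin.val h
  rw [B.boxCyclePage_val_of_eq hab', B.boxCyclePage_val_of_eq hcd',
    Nat.add_left_cancel_iff] at hcolor
  unfold boxCyclePos at h1 h2 h3
  rw [← hab'] at h2 h3
  rw [← hcd'] at h3
  have := le_of_snakePos_lt (B.ord a.1).2 (h1.trans h2)
  have := le_of_snakePos_lt (B.ord c.1).2 (h2.trans h3)
  have := cycleGraph_adj_val hab
  have := cycleGraph_adj_val hcd
  have := Fin.val_ne_of_ne hab.ne
  have := Fin.val_ne_of_ne hcd.ne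
  exact snakePos_not_crossing_of_cycle_edges (B.ord a.1).2 (B.ord c.1).2 d.2.2 (by omega)
    (by omega) hcolor h1 h2 h3

noncomputable def boxProdCycle (B : MatchingBookEmbedding G k) (m : ℕ) :
    MatchingBookEmbedding (G □ cycleGraph (2 * m)) (k + 2) :=
  ofPosition B.boxCyclePos
    (fun x y h => by
      obtain ⟨h2, h1⟩ := snakePos_inj (B.ord x.1).2 (B.ord y.1).2 h
      exact Prod.ext (B.ord.injective (Fin.ext h1)) (Fin.ext h2))
    (fun x => by
      rw [Fintype.card_prod, Fintype.card_fin]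
      exact snakePos_lt_mul (B.ord x.1).2 x.2.2)
    (fun e => Sym2.lift ⟨B.boxCyclePage, B.boxCyclePage_comm⟩ e.1)
    (fun _ _ _ ha hb h => B.eq_of_boxCyclePage_eq ha hb h)
    (fun a b c d hab hcd h h1 h2 h3 => by
      rcases boxProd_adj.mp hab with ⟨hab, hab'⟩ | ⟨hab, hab'⟩ <;>
        rcases boxProd_adj.mp hcd with ⟨hcd, hcd'⟩ | ⟨hcd, hcd'⟩
      · exact B.boxCyclePage_not_crossing_of_adj hab hab' hcd hcd' h h1 h2 h3
      · exact B.boxCyclePage_ne hab hcd' h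
      · exact B.boxCyclePage_ne hcd hab' h.symm
      · exact B.boxCyclePage_not_crossing_of_eq hab hab' hcd hcd' h h1 h2 h3)

end Upper

end MatchingBookEmbedding

/-- For `n, m ≥ 2`, `mbt (K_{2n+1} □ C_{2m}) = 2n + 3 = Δ + 1`. -/
theorem stmt_11 (n m : ℕ) (hn : 2 ≤ n) (hm : 2 ≤ m) :
    mbt ((⊤ : SimpleGraph (Fin (2 * n + 1))) □ cycleGraph (2 * m)) = 2 * n + 3 ∧
    ((⊤ : SimpleGraph (Fin (2 * n + 1))) □ cycleGraph (2 * m)).maxDegree + 1 = 2 * n + 3 := by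
  have hK : (⊤ : SimpleGraph (Fin (2 * n + 1))).IsRegularOfDegree (2 * n) := by
    simpa using IsRegularOfDegree.top (V := Fin (2 * n + 1))
  have hreg := hK.boxProd (cycleGraph_isRegularOfDegree_two (n := 2 * m) (by omega))
  have hcol : ¬ ((⊤ : SimpleGraph (Fin (2 * n + 1))) □ cycleGraph (2 * m)).Colorable 2 :=
    not_colorable_boxProd (not_colorable_top (by omega)) ⟨0, by omega⟩
  have : Nonempty (Fin (2 * n + 1) × Fin (2 * m)) := ⟨(0, ⟨0, by omega⟩)⟩
  have B := (MatchingBookEmbedding.top (2 * n + 1)).boxProdCycle m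
  rw [show 2 * n + 1 + 2 = 2 * n + 3 by ring] at B
  refine ⟨mbt_eq B fun j B' => B'.lt_of_isRegularOfDegree hreg hcol, ?_⟩
  -- `maxDegree` counts neighbours via `DecidableRel`, `hreg` via `boxProdFintypeNeighborSet`.
  rw [IsRegularOfDegree.maxDegree_eq
    (G := (⊤ : SimpleGraph (Fin (2 * n + 1))) □ cycleGraph (2 * m)) (d := 2 * n + 2)
    fun v => by convert hreg.degree_eq v]
end

section
/- Every tree T with at least one edge is dispersable: mbt(T) = Δ(T). -/
open SimpleGraph
open scoped Classical

/-!
The lower bound holds for every graph: the edges at a vertex lie on pairwise distinct pages.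
For the upper bound, induct on the number of edges of a finite forest with degrees at most `k`.
A forest with an edge has a leaf `x` with neighbour `u`; lay out the forest without the edge `xu`,
put `x` directly after `u` on the spine, and give `xu` a page that no other edge at `u` uses
(there are at most `k - 1` such edges). No edge can cross `xu`, since no vertex lies strictly
between `u` and `x`.
-/

namespace SimpleGraph

theorem IsAcyclic.exists_existsUnique_adj {V : Type*} [Finite V] {G : SimpleGraph V}
    (hG : G.IsAcyclic) (hne : G.edgeSet.Nonempty) : ∃ x, ∃! u, G.Adj x u := by
  obtain ⟨⟨a, b⟩, he : G.Adj a b⟩ := hne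
  have : Nonempty V := ⟨a⟩
  -- the start of a longest path is a leaf
  obtain ⟨x, y, p, hp, hmax⟩ := Walk.exists_isPath_forall_isPath_length_le_length G
  have hnil : ¬p.Nil := by
    intro h
    have := hmax a b (.cons he .nil) (Walk.IsPath.nil.cons (by simp [he.ne]))
    simp [Walk.length_eq_zero_iff.mpr h] at this
  refine ⟨x, p.snd, p.adj_snd hnil, fun w hw => hG.eq_snd_of_adj_start hp hw ?_⟩
  by_contra hw'
  have := hmax w y (.cons hw.symm p) (hp.cons hw')
  simp at this

end SimpleGraph

section insertAfter

variable {V : Type*}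

/-- Doubling the positions leaves a free slot `2 * f u + 1` directly after `u` for `x`. -/
noncomputable def insertAfter (f : V → ℕ) (x u y : V) : ℕ :=
  if y = x then 2 * f u + 1 else 2 * f y

variable {f : V → ℕ} {x u y : V}

theorem insertAfter_self : insertAfter f x u x = 2 * f u + 1 := if_pos rfl

theorem insertAfter_of_ne (h : y ≠ x) : insertAfter f x u y = 2 * f y := if_neg h

theorem insertAfter_injective (hf : f.Injective) : (insertAfter f x u).Injective := by
  intro a b hab
  unfold insertAfter at hab
  split_ifs at hab with ha hb hb
  · rw [ha, hb]
  · omega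
  · omega
  · exact hf (by omega)

end insertAfter

/-- A matching book embedding with the spine given by any injective map to `ℕ` and pages
assigned to all of `Sym2 V`. Unlike `MatchingBookEmbedding`, it survives deleting edges and
moving a vertex on the spine without changing the vertex type. -/
structure MatchingBookLayout {V : Type*} (G : SimpleGraph V) (k : ℕ) where
  pos : V → ℕ
  pos_injective : Function.Injective pos
  page : Sym2 V → ℕ
  page_lt : ∀ e ∈ G.edgeSet, page e < k
  matching : ∀ v a b, G.Adj v a → G.Adj v b → page s(v, a) = page s(v, b) → a = b
  noncross : ∀ a b c d, G.Adj a b → G.Adj c d → page s(a, b) = page s(c, d) →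
    pos a < pos c → pos c < pos b → pos b < pos d → False

namespace MatchingBookLayout

variable {V : Type*} {G : SimpleGraph V} {k : ℕ}

theorem exists_unused_page (L : MatchingBookLayout G k) {v : V}
    (hv : (G.neighborSet v).Finite) (hdeg : (G.neighborSet v).ncard < k) :
    ∃ c < k, ∀ w, G.Adj v w → L.page s(v, w) ≠ c := by
  have hlt : ((fun w => L.page s(v, w)) '' G.neighborSet v).ncard < (Set.Iio k).ncard := by
    rw [← Finset.coe_range, Set.ncard_coe_finset, Finset.card_range]
    exact (Set.ncard_image_le hv).trans_lt hdeg
  obtain ⟨c, hck, hc⟩ := Set.exists_mem_notMem_of_ncard_lt_ncard hlt (hv.image _)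
  exact ⟨c, hck, fun w hw hwc => hc ⟨w, hw, hwc⟩⟩

noncomputable def addLeaf {x u : V} (L : MatchingBookLayout (G.deleteEdges {s(x, u)}) k)
    (hleaf : ∀ w, G.Adj x w → w = u) {c : ℕ} (hc : c < k)
    (hfree : ∀ w, (G.deleteEdges {s(x, u)}).Adj u w → L.page s(u, w) ≠ c) :
    MatchingBookLayout G k where
  pos := insertAfter L.pos x u
  pos_injective := insertAfter_injective L.pos_injective
  page e := if e = s(x, u) then c else L.page e
  page_lt e he := by
    split_ifs with hxu
    · exact hc
    · exact L.page_lt e (by rw [edgeSet_deleteEdges]; exact ⟨he, hxu⟩)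
  matching v a b hva hvb hpage := by
    have hpendant : ∀ w w', G.Adj v w → G.Adj v w' → s(v, w) = s(x, u) →
        s(v, w') ≠ s(x, u) → L.page s(v, w') ≠ c := by
      intro w w' hw hw' he he'
      rcases Sym2.eq_iff.mp he with ⟨rfl, rfl⟩ | ⟨rfl, rfl⟩
      · exact absurd (by rw [hleaf w' hw']) he'
      · exact hfree w' (deleteEdges_adj.mpr ⟨hw', he'⟩)
    split_ifs at hpage with ha hb hb
    · exact Sym2.congr_right.mp (ha.trans hb.symm)
    · exact absurd hpage.symm (hpendant a b hva hvb ha hb)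
    · exact absurd hpage (hpendant b a hvb hva hb ha)
    · exact L.matching v a b (deleteEdges_adj.mpr ⟨hva, ha⟩)
        (deleteEdges_adj.mpr ⟨hvb, hb⟩) hpage
  noncross a b p q hab hpq hpage h₁ h₂ h₃ := by
    by_cases hab' : s(a, b) = s(x, u)
    · rcases Sym2.eq_iff.mp hab' with ⟨rfl, rfl⟩ | ⟨rfl, rfl⟩ <;>
        simp only [insertAfter_self, insertAfter_of_ne hab.ne', insertAfter_of_ne hab.ne]
          at h₁ h₂ <;>
        omega
    by_cases hpq' : s(p, q) = s(x, u)
    · rcases Sym2.eq_iff.mp hpq' with ⟨rfl, rfl⟩ | ⟨rfl, rfl⟩ <;>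
        simp only [insertAfter_self, insertAfter_of_ne hpq.ne', insertAfter_of_ne hpq.ne]
          at h₂ h₃ <;>
        omega
    have hne : ∀ y z, G.Adj y z → s(y, z) ≠ s(x, u) → y ≠ x ∧ z ≠ x := by
      refine fun y z hyz he => ⟨?_, ?_⟩ <;> rintro rfl
      · exact he (by rw [hleaf z hyz])
      · exact he (by rw [Sym2.eq_swap, hleaf y hyz.symm])
    obtain ⟨ha, hb⟩ := hne a b hab hab'
    obtain ⟨hp, hq⟩ := hne p q hpq hpq'
    rw [if_neg hab', if_neg hpq'] at hpage
    rw [insertAfter_of_ne ha, insertAfter_of_ne hp] at h₁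
    rw [insertAfter_of_ne hp, insertAfter_of_ne hb] at h₂
    rw [insertAfter_of_ne hb, insertAfter_of_ne hq] at h₃
    exact L.noncross a b p q (deleteEdges_adj.mpr ⟨hab, hab'⟩)
      (deleteEdges_adj.mpr ⟨hpq, hpq'⟩) hpage (by omega) (by omega) (by omega)

noncomputable def toMatchingBookEmbedding [Fintype V] (L : MatchingBookLayout G k) :
    MatchingBookEmbedding G k :=
  letI : LinearOrder V := LinearOrder.lift' L.pos L.pos_injective
  { ord := (Fintype.orderIsoFinOfCardEq V rfl).symm.toEquiv
    page := fun e => ⟨L.page e, L.page_lt e e.2⟩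
    matching := by
      rintro ⟨e, he⟩ ⟨f, hf⟩ hef hpage v hve hvf
      obtain ⟨a, rfl⟩ := Sym2.mem_iff_exists.mp hve
      obtain ⟨b, rfl⟩ := Sym2.mem_iff_exists.mp hvf
      have hab := L.matching v a b he hf (Fin.val_eq_of_eq hpage)
      exact hef (by subst hab; rfl)
    noncross := by
      rintro ⟨e, he⟩ ⟨f, hf⟩ hpage a b c d rfl rfl hac hcb hbd
      have hpos {x y : V} (h : _ < _) : L.pos x < L.pos y :=
        (Fintype.orderIsoFinOfCardEq V rfl).symm.lt_iff_lt.mp h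
      exact L.noncross a b c d he hf (Fin.val_eq_of_eq hpage) (hpos hac) (hpos hcb) (hpos hbd) }

end MatchingBookLayout

theorem SimpleGraph.IsAcyclic.nonempty_matchingBookLayout {V : Type*} [Finite V]
    {G : SimpleGraph V} {k : ℕ} (hG : G.IsAcyclic) (hk : ∀ v, (G.neighborSet v).ncard ≤ k) :
    Nonempty (MatchingBookLayout G k) := by
  induction hn : G.edgeSet.ncard generalizing G with
  | zero =>
    obtain rfl : G = ⊥ := edgeSet_eq_empty.mp ((Set.ncard_eq_zero).mp hn)
    obtain ⟨f, hf⟩ := Countable.exists_injective_nat V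
    exact ⟨⟨f, hf, fun _ => 0, by simp, by simp, by simp⟩⟩
  | succ n ih =>
    obtain ⟨x, u, hxu, hleaf⟩ :=
      hG.exists_existsUnique_adj (Set.nonempty_of_ncard_ne_zero (by omega))
    set G' := G.deleteEdges {s(x, u)}
    have hsub (v : V) : G'.neighborSet v ⊆ G.neighborSet v :=
      neighborSet_mono (deleteEdges_le _) v
    have hcard : G'.edgeSet.ncard = n := by
      rw [edgeSet_deleteEdges, Set.ncard_sdiff_singleton_of_mem (G.mem_edgeSet.mpr hxu), hn]
      rfl
    obtain ⟨L⟩ := ih (hG.anti (deleteEdges_le _))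
      (fun v => (Set.ncard_le_ncard (hsub v)).trans (hk v)) hcard
    have hu : (G'.neighborSet u).ncard < k := by
      have hx : x ∉ G'.neighborSet u := by simp [G', Sym2.eq_swap]
      have hssub := (Set.ssubset_iff_of_subset (hsub u)).mpr ⟨x, hxu.symm, hx⟩
      exact (Set.ncard_lt_ncard hssub).trans_le (hk u)
    obtain ⟨c, hc, hfree⟩ := L.exists_unused_page (Set.toFinite _) hu
    exact ⟨L.addLeaf hleaf hc hfree⟩

theorem MatchingBookEmbedding.degree_le_s13 {V : Type*} [Fintype V] {G : SimpleGraph V} {k : ℕ}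
    (B : MatchingBookEmbedding G k) (v : V) [Fintype (G.neighborSet v)] : G.degree v ≤ k := by
  let pageAt (w : G.neighborSet v) : Fin k := B.page ⟨s(v, w), w.2⟩
  have hinj : pageAt.Injective := by
    intro w w' h
    by_contra hne
    refine B.matching _ _ (fun he => hne ?_) h v (Sym2.mem_mk_left _ _) (Sym2.mem_mk_left _ _)
    exact Subtype.ext (Sym2.congr_right.mp (congrArg Subtype.val he))
  calc G.degree v = Fintype.card (G.neighborSet v) := (card_neighborSet_eq_degree G v).symm
    _ ≤ Fintype.card (Fin k) := Fintype.card_le_of_injective _ hinj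
    _ = k := Fintype.card_fin k

theorem mbt_eq_maxDegree_of_matchingBookEmbedding {V : Type*} [Fintype V] {G : SimpleGraph V}
    [DecidableRel G.Adj] (B : MatchingBookEmbedding G G.maxDegree) : mbt G = G.maxDegree :=
  le_antisymm (Nat.sInf_le ⟨B⟩) <| le_csInf ⟨_, ⟨B⟩⟩ fun _ ⟨B'⟩ =>
    G.maxDegree_le_of_forall_degree_le _ fun v => B'.degree_le_s13 v

theorem stmt_13_general {V : Type*} [Fintype V] (T : SimpleGraph V) [DecidableRel T.Adj]
    (htree : T.IsTree) :
    mbt T = T.maxDegree := by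
  obtain ⟨L⟩ := htree.isAcyclic.nonempty_matchingBookLayout (k := T.maxDegree) fun v => by
    rw [Set.ncard_eq_toFinset_card', Set.toFinset_card, card_neighborSet_eq_degree]
    exact T.degree_le_maxDegree v
  exact mbt_eq_maxDegree_of_matchingBookEmbedding L.toMatchingBookEmbedding

/-- Every tree with at least one edge is dispersable: `mbt T = Δ(T)`. -/
theorem stmt_13 {V : Type*} [Fintype V] (T : SimpleGraph V) [DecidableRel T.Adj]
    (htree : T.IsTree) (hedge : T.edgeSet.Nonempty) :
    mbt T = T.maxDegree :=
  stmt_13_general T htree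
end

section
/- The complete bipartite graph K_{n,n} (n ≥ 1) is dispersable: mbt(K_{n,n}) = n. -/
open SimpleGraph
open scoped Classical

lemma edge_form {n : ℕ} (e : (completeBipartiteGraph (Fin n) (Fin n)).edgeSet) :
    ∃ i j : Fin n, (e : Sym2 (Fin n ⊕ Fin n)) = s(Sum.inl i, Sum.inr j) := by
  obtain ⟨e, he⟩ := e
  induction e using Sym2.ind with
  | _ x y =>
    rw [SimpleGraph.mem_edgeSet] at he
    cases x with
    | inl i =>
      cases y with
      | inl i' => simp at he
      | inr j => exact ⟨i, j, rfl⟩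
    | inr j =>
      cases y with
      | inl i => exact ⟨i, j, Sym2.eq_swap⟩
      | inr j' => simp at he

lemma modkey (n s1 s2 : ℕ) (h : s1 % n = s2 % n) (h1 : s1 < s2) (h2 : s2 < s1 + n) :
    False := by
  have hd : n ∣ s2 - s1 := (Nat.modEq_iff_dvd' h1.le).mp h
  have := Nat.le_of_dvd (by omega) hd
  omega

/-- position on the spine -/
def posKnn (n : ℕ) : Fin n ⊕ Fin n → ℕ
  | .inl i => 2 * i
  | .inr j => 2 * j + 1

lemma posKnn_inj (n : ℕ) : Function.Injective (posKnn n) := by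
  intro a b hab
  cases a with
  | inl i => cases b with
    | inl i' => simp only [posKnn] at hab; exact congrArg _ (Fin.ext (by omega))
    | inr j => simp only [posKnn] at hab; omega
  | inr j => cases b with
    | inl i' => simp only [posKnn] at hab; omega
    | inr j' => simp only [posKnn] at hab; exact congrArg _ (Fin.ext (by omega))

/-- The complete bipartite graph `K_{n,n}` (`n ≥ 1`) is dispersable:
`mbt (K_{n,n}) = n`. -/
theorem stmt_15 (n : ℕ) (hn : 1 ≤ n) :
    mbt (completeBipartiteGraph (Fin n) (Fin n)) = n := by
  set G := completeBipartiteGraph (Fin n) (Fin n) with hG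
  -- construction of an embedding with n pages
  have hcard : Fintype.card (Fin n ⊕ Fin n) = n + n := by simp
  have hposlt : ∀ v, posKnn n v < n + n := by
    intro v
    cases v with
    | inl i => have := i.isLt; simp only [posKnn]; omega
    | inr j => have := j.isLt; simp only [posKnn]; omega
  let f : Fin n ⊕ Fin n → Fin (n + n) := fun v => ⟨posKnn n v, hposlt v⟩
  have hfbij : Function.Bijective f := by
    have hinj : Function.Injective f := fun a b h => posKnn_inj n (congrArg Fin.val h)
    rw [Fintype.bijective_iff_injective_and_card]
    exact ⟨hinj, by simp⟩
  let ordE : (Fin n ⊕ Fin n) ≃ Fin (Fintype.card (Fin n ⊕ Fin n)) :=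
    (Equiv.ofBijective f hfbij).trans (finCongr hcard.symm)
  have hordlt : ∀ a b : Fin n ⊕ Fin n, ordE a < ordE b ↔ posKnn n a < posKnn n b := by
    intro a b
    simp only [ordE, Equiv.trans_apply, finCongr_apply, Fin.lt_def, Fin.coe_cast]
    rfl
  let g : Fin n ⊕ Fin n → ℕ := Sum.elim (fun i => (i : ℕ)) (fun j => (j : ℕ))
  let pageNat : Sym2 (Fin n ⊕ Fin n) → ℕ :=
    Sym2.lift ⟨fun x y => (g x + g y) % n, fun x y => by dsimp only; rw [Nat.add_comm]⟩
  have hpageNat : ∀ (e : G.edgeSet) (i j : Fin n),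
      (e : Sym2 (Fin n ⊕ Fin n)) = s(Sum.inl i, Sum.inr j) →
      pageNat (e : Sym2 (Fin n ⊕ Fin n)) = ((i : ℕ) + j) % n := by
    intro e i j h
    rw [h]
    simp [pageNat, g]
  have hpl : ∀ s : Sym2 (Fin n ⊕ Fin n), pageNat s < n := by
    intro s
    induction s using Sym2.ind with
    | _ x y =>
      show (g x + g y) % n < n
      exact Nat.mod_lt _ (by omega)
  let emb : MatchingBookEmbedding G n :=
    { ord := ordE
      page := fun e => ⟨pageNat (e : Sym2 (Fin n ⊕ Fin n)), hpl _⟩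
      matching := by
        intro e f hef hpage v hve hvf
        obtain ⟨i1, j1, he⟩ := edge_form e
        obtain ⟨i2, j2, hf⟩ := edge_form f
        have hp : ((i1 : ℕ) + j1) % n = ((i2 : ℕ) + j2) % n := by
          have hvp : pageNat (e : Sym2 (Fin n ⊕ Fin n)) = pageNat (f : Sym2 (Fin n ⊕ Fin n)) :=
            congrArg Fin.val hpage
          rw [hpageNat e i1 j1 he, hpageNat f i2 j2 hf] at hvp
          exact hvp
        rw [he, Sym2.mem_iff] at hve
        rw [hf, Sym2.mem_iff] at hvf
        have key : i1 = i2 ∧ j1 = j2 := by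
          rcases hve with rfl | rfl <;> rcases hvf with h | h
          · have hii : i1 = i2 := by injection h
            refine ⟨hii, ?_⟩
            subst hii
            have hj1 := j1.isLt; have hj2 := j2.isLt
            have : (j1 : ℕ) % n = (j2 : ℕ) % n := by
              have := Nat.ModEq.add_left_cancel' (i1 : ℕ) (hp : _ ≡ _ [MOD n])
              exact this
            exact Fin.ext (by rwa [Nat.mod_eq_of_lt hj1, Nat.mod_eq_of_lt hj2] at this)
          · exact absurd h (by simp)
          · exact absurd h (by simp)
          · have hjj : j1 = j2 := by injection h
            refine ⟨?_, hjj⟩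
            subst hjj
            have hi1 := i1.isLt; have hi2 := i2.isLt
            have : (i1 : ℕ) % n = (i2 : ℕ) % n := by
              have := Nat.ModEq.add_right_cancel' (j1 : ℕ) (hp : _ ≡ _ [MOD n])
              exact this
            exact Fin.ext (by rwa [Nat.mod_eq_of_lt hi1, Nat.mod_eq_of_lt hi2] at this)
        obtain ⟨rfl, rfl⟩ := key
        exact hef (Subtype.ext (he.trans hf.symm))
      noncross := by
        intro e f hpage a b c d he hf h1 h2 h3
        obtain ⟨i1, j1, he'⟩ := edge_form e
        obtain ⟨i2, j2, hf'⟩ := edge_form f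
        have hp : ((i1 : ℕ) + j1) % n = ((i2 : ℕ) + j2) % n := by
          have hvp : pageNat (e : Sym2 (Fin n ⊕ Fin n)) = pageNat (f : Sym2 (Fin n ⊕ Fin n)) :=
            congrArg Fin.val hpage
          rw [hpageNat e i1 j1 he', hpageNat f i2 j2 hf'] at hvp
          exact hvp
        rw [hordlt] at h1 h2 h3
        rw [he] at he'
        rw [hf] at hf'
        rw [Sym2.eq_iff] at he' hf'
        have hi1 := i1.isLt; have hj1 := j1.isLt
        have hi2 := i2.isLt; have hj2 := j2.isLt
        rcases he' with ⟨rfl, rfl⟩ | ⟨rfl, rfl⟩ <;>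
          rcases hf' with ⟨rfl, rfl⟩ | ⟨rfl, rfl⟩ <;>
          simp only [posKnn] at h1 h2 h3 <;>
          [ exact modkey n ((i1:ℕ)+j1) ((i2:ℕ)+j2) hp (by omega) (by omega);
            exact modkey n ((i1:ℕ)+j1) ((i2:ℕ)+j2) hp (by omega) (by omega);
            exact modkey n ((i1:ℕ)+j1) ((i2:ℕ)+j2) hp (by omega) (by omega);
            exact modkey n ((i1:ℕ)+j1) ((i2:ℕ)+j2) hp (by omega) (by omega) ] }
  have hmem : n ∈ {k | Nonempty (MatchingBookEmbedding G k)} := ⟨emb⟩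
  -- lower bound
  have hlow : ∀ k ∈ {k | Nonempty (MatchingBookEmbedding G k)}, n ≤ k := by
    rintro k ⟨E⟩
    classical
    let e0 : Fin n → G.edgeSet := fun j =>
      ⟨s(Sum.inl ⟨0, hn⟩, Sum.inr j), by simp [hG]⟩
    have hinj : Function.Injective (fun j => E.page (e0 j)) := by
      intro j j' h
      by_contra hne
      have hne' : e0 j ≠ e0 j' := by
        intro hh
        apply hne
        have : (e0 j : Sym2 (Fin n ⊕ Fin n)) = (e0 j' : Sym2 (Fin n ⊕ Fin n)) :=
          congrArg Subtype.val hh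
        simp only [e0, Sym2.eq_iff] at this
        rcases this with ⟨_, h2⟩ | ⟨h1, _⟩
        · exact Sum.inr_injective h2
        · exact absurd h1 (by simp)
      exact E.matching (e0 j) (e0 j') hne' h (Sum.inl ⟨0, hn⟩)
        (by simp [e0]) (by simp [e0])
    calc n = Fintype.card (Fin n) := by simp
    _ ≤ Fintype.card (Fin k) := Fintype.card_le_of_injective _ hinj
    _ = k := by simp
  refine le_antisymm (Nat.sInf_le hmem) (le_csInf ⟨n, hmem⟩ hlow)
end

section
/- For even p and even q with p, q ≥ 4, mbt(C_p □ C_q) = 4; for even p ≥ 4 and odd q ≥ 3, mbt(C_p □ C_q) = 5. -/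
open SimpleGraph
open scoped Classical

namespace Stmt16

lemma mod_eq_one_cases {n x : ℕ} (hx : x < 2 * n) (h : x % n = 1) : x = 1 ∨ x = n + 1 := by
  rcases Nat.lt_or_ge x n with h' | h'
  · rw [Nat.mod_eq_of_lt h'] at h; omega
  · rw [Nat.mod_eq_sub_mod h', Nat.mod_eq_of_lt (by omega)] at h; omega

lemma cyc_pair {n : ℕ} (hn : 3 ≤ n) {a b : Fin n} (h : (cycleGraph n).Adj a b) :
    (a.val + 1 = b.val ∨ b.val + 1 = a.val) ∨
      (a.val = 0 ∧ b.val = n - 1) ∨ (b.val = 0 ∧ a.val = n - 1) := by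
  have ha := a.isLt; have hb := b.isLt
  rw [cycleGraph_adj', Fin.sub_def, Fin.sub_def] at h
  simp only [Fin.val_mk] at h
  rcases h with h | h
  · rcases mod_eq_one_cases (by omega) h with h' | h' <;> omega
  · rcases mod_eq_one_cases (by omega) h with h' | h' <;> omega

lemma cyc_adj_succ {n : ℕ} (hn : 3 ≤ n) {a b : Fin n} (h : a.val + 1 = b.val) :
    (cycleGraph n).Adj a b := by
  have ha := a.isLt; have hb := b.isLt
  rw [cycleGraph_adj', Fin.sub_def, Fin.sub_def]
  simp only [Fin.val_mk]
  right
  have h1 : n - a.val + b.val = n + 1 := by omega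
  rw [h1, Nat.add_mod_left, Nat.mod_eq_of_lt (by omega)]

lemma cyc_adj_wrap {n : ℕ} (hn : 3 ≤ n) {a b : Fin n} (h0 : a.val = 0) (h1 : b.val = n - 1) :
    (cycleGraph n).Adj a b := by
  rw [cycleGraph_adj', Fin.sub_def, Fin.sub_def]
  simp only [Fin.val_mk]
  left
  have h2 : n - b.val + a.val = 1 := by omega
  rw [h2, Nat.mod_eq_of_lt (by omega)]

lemma lex_lt {q i1 t1 i2 t2 : ℕ} (h1 : t1 < q) (h2 : t2 < q) :
    i1 * q + t1 < i2 * q + t2 ↔ i1 < i2 ∨ (i1 = i2 ∧ t1 < t2) := by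
  constructor
  · intro h
    rcases lt_trichotomy i1 i2 with h' | h' | h'
    · exact Or.inl h'
    · subst h'; right; exact ⟨rfl, by omega⟩
    · exfalso
      have h3 : (i2 + 1) * q ≤ i1 * q := Nat.mul_le_mul_right q h'
      rw [add_one_mul] at h3
      omega
  · rintro (h | ⟨rfl, h⟩)
    · have h3 : (i1 + 1) * q ≤ i2 * q := Nat.mul_le_mul_right q h
      rw [add_one_mul] at h3
      omega
    · omega

lemma sym2_cases {α : Type*} (z : Sym2 α) : ∃ a b, z = s(a, b) :=
  Sym2.ind (fun a b => ⟨a, b, rfl⟩) z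

lemma even_card_of_involution {α : Type*} [DecidableEq α] (s : Finset α) (f : α → α)
    (hmem : ∀ x ∈ s, f x ∈ s) (hinv : ∀ x ∈ s, f (f x) = x) (hne : ∀ x ∈ s, f x ≠ x) :
    Even s.card := by
  induction s using Finset.strongInduction with
  | _ s ih =>
    rcases s.eq_empty_or_nonempty with rfl | ⟨x, hx⟩
    · simp
    · have hfx : f x ∈ s := hmem x hx
      have hxne : f x ≠ x := hne x hx
      set t := (s.erase x).erase (f x) with ht
      have htsub : t ⊆ s := fun y hy => Finset.mem_of_mem_erase (Finset.mem_of_mem_erase hy)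
      have hts : t ⊂ s := (Finset.ssubset_iff_of_subset htsub).mpr ⟨x, hx, by simp [ht]⟩
      have hmt : ∀ y ∈ t, y ∈ s ∧ y ≠ x ∧ y ≠ f x := by
        intro y hy
        refine ⟨htsub hy, ?_, ?_⟩
        · exact Finset.ne_of_mem_erase (Finset.mem_of_mem_erase hy)
        · exact Finset.ne_of_mem_erase hy
      have hcard : s.card = t.card + 2 := by
        have h1 : (s.erase x).card = s.card - 1 := Finset.card_erase_of_mem hx
        have h2 : t.card = (s.erase x).card - 1 :=
          Finset.card_erase_of_mem (Finset.mem_erase.mpr ⟨hxne, hfx⟩)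
        have h3 : 0 < s.card := Finset.card_pos.mpr ⟨x, hx⟩
        have h4 : 0 < (s.erase x).card :=
          Finset.card_pos.mpr ⟨f x, Finset.mem_erase.mpr ⟨hxne, hfx⟩⟩
        omega
      have hev : Even t.card := by
        refine ih t hts (fun y hy => ?_) (fun y hy => hinv y (htsub hy)) (fun y hy => hne y (htsub hy))
        obtain ⟨hys, hyx, hyfx⟩ := hmt y hy
        refine Finset.mem_erase.mpr ⟨?_, Finset.mem_erase.mpr ⟨?_, hmem y hys⟩⟩
        · intro hcon
          exact hyx (by rw [← hinv y hys, hcon, hinv x hx])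
        · intro hcon
          exact hyfx (by rw [← hinv y hys, hcon])
      rw [hcard]
      rcases hev with ⟨m, hm⟩
      exact ⟨m + 1, by omega⟩

section Cons

variable {p q : ℕ}

/-- local position within a column -/
def ell (q : ℕ) (i : Fin p) (j : Fin q) : ℕ :=
  if i.val % 2 = 0 then j.val else q - 1 - j.val

lemma ell_lt (i : Fin p) (j : Fin q) : ell q i j < q := by
  have := j.isLt; unfold ell; split <;> omega

lemma ell_inj {i : Fin p} {j1 j2 : Fin q} (h : ell q i j1 = ell q i j2) : j1 = j2 := by
  have h1 := j1.isLt; have h2 := j2.isLt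
  unfold ell at h
  apply Fin.ext
  split at h <;> omega

lemma ell_flip (hp2 : p % 2 = 0) {i1 i2 : Fin p}
    (h : i1.val + 1 = i2.val ∨ i2.val + 1 = i1.val ∨
      (i1.val = 0 ∧ i2.val = p - 1) ∨ (i2.val = 0 ∧ i1.val = p - 1))
    (j : Fin q) : ell q i1 j + ell q i2 j = q - 1 := by
  have h1 := i1.isLt; have h2 := i2.isLt; have hj := j.isLt
  have hpar : (i1.val % 2 = 0) ↔ ¬ (i2.val % 2 = 0) := by omega
  unfold ell
  split <;> split <;> omega

def pos (q : ℕ) (v : Fin p × Fin q) : ℕ := v.1.val * q + ell q v.1 v.2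

lemma pos_lt (v : Fin p × Fin q) : pos q v < p * q := by
  have h1 : (v.1.val + 1) * q ≤ p * q := Nat.mul_le_mul_right q v.1.isLt
  have h2 := ell_lt v.1 v.2
  rw [add_one_mul] at h1
  unfold pos
  omega

lemma pos_inj {u v : Fin p × Fin q} (h : pos q u = pos q v) : u = v := by
  have h1 := ell_lt u.1 u.2; have h2 := ell_lt v.1 v.2
  unfold pos at h
  have l1 := @lex_lt q u.1.val (ell q u.1 u.2) v.1.val (ell q v.1 v.2) h1 h2
  have l2 := @lex_lt q v.1.val (ell q v.1 v.2) u.1.val (ell q u.1 u.2) h2 h1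
  have hc : u.1.val = v.1.val ∧ ell q u.1 u.2 = ell q v.1 v.2 := by omega
  have hfst : u.1 = v.1 := Fin.ext hc.1
  have hsnd : u.2 = v.2 := ell_inj (i := u.1) (by rw [hc.2, hfst])
  exact Prod.ext hfst hsnd

/-- page of a vertical edge with local endpoints s < u -/
def vpageN (q s u : ℕ) : ℕ :=
  if s = 0 ∧ u = q - 1 then (if q % 2 = 0 then 1 else 2) else s % 2

/-- page of a horizontal edge with columns s < u -/
def hpageN (p q s u : ℕ) : ℕ :=
  (if q % 2 = 0 then 2 else 3) + (if s = 0 ∧ u = p - 1 then 1 else s % 2)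

lemma vpage_lt_hpage {s u s' u' : ℕ} : vpageN q s u < hpageN p q s' u' := by
  unfold vpageN hpageN; split_ifs <;> omega

def pageF (q : ℕ) (u v : Fin p × Fin q) : ℕ :=
  if u.1 = v.1 then
    vpageN q (min (ell q u.1 u.2) (ell q u.1 v.2)) (max (ell q u.1 u.2) (ell q u.1 v.2))
  else hpageN p q (min u.1.val v.1.val) (max u.1.val v.1.val)

lemma pageF_symm (u v : Fin p × Fin q) : pageF q u v = pageF q v u := by
  unfold pageF
  rcases eq_or_ne u.1 v.1 with h | h
  · rw [if_pos h, if_pos h.symm, h, min_comm, max_comm]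
  · rw [if_neg h, if_neg (Ne.symm h), min_comm, max_comm]

lemma pageF_lt (u v : Fin p × Fin q) : pageF q u v < if q % 2 = 0 then 4 else 5 := by
  unfold pageF vpageN hpageN; split_ifs <;> omega

def pageN (q : ℕ) : Sym2 (Fin p × Fin q) → ℕ := Sym2.lift ⟨pageF q, pageF_symm⟩

lemma pageN_lt (z : Sym2 (Fin p × Fin q)) : pageN q z < if q % 2 = 0 then 4 else 5 :=
  Sym2.ind (fun u v => pageF_lt u v) z

lemma vert_pair (hq3 : 3 ≤ q) (i : Fin p) {a2 b2 : Fin q} (h : (cycleGraph q).Adj a2 b2) :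
    (ell q i a2 + 1 = ell q i b2 ∨ ell q i b2 + 1 = ell q i a2) ∨
      (ell q i a2 = 0 ∧ ell q i b2 = q - 1) ∨ (ell q i b2 = 0 ∧ ell q i a2 = q - 1) := by
  have h1 := a2.isLt; have h2 := b2.isLt
  have hc := cyc_pair hq3 h
  unfold ell
  split <;> omega

end Cons

section LB

variable {p q : ℕ}

lemma cyc_adj_mod {n : ℕ} (hn : 3 ≤ n) (i : Fin n) :
    (cycleGraph n).Adj i ⟨(i.val + 1) % n, Nat.mod_lt _ (by omega)⟩ := by
  rcases Nat.lt_or_ge (i.val + 1) n with h | h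
  · exact cyc_adj_succ hn (by simp [Nat.mod_eq_of_lt h])
  · have hi : i.val = n - 1 := by have := i.isLt; omega
    have hv : (i.val + 1) % n = 0 := by
      have h2 : i.val + 1 = n := by have := i.isLt; omega
      rw [h2, Nat.mod_self]
    exact (cyc_adj_wrap hn (by simp [hv]) (by simp [hi])).symm

lemma cyc_adj_modpred {n : ℕ} (hn : 3 ≤ n) (i : Fin n) :
    (cycleGraph n).Adj i ⟨(i.val + (n - 1)) % n, Nat.mod_lt _ (by omega)⟩ := by
  rcases Nat.eq_zero_or_pos i.val with h | h
  · have hv : (i.val + (n - 1)) % n = n - 1 := by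
      rw [h, Nat.zero_add, Nat.mod_eq_of_lt (by omega)]
    exact cyc_adj_wrap hn h (by simp [hv])
  · have hv : (i.val + (n - 1)) % n = i.val - 1 := by
      have := i.isLt
      rw [Nat.mod_eq_sub_mod (by omega : n ≤ i.val + (n - 1))]
      have h2 : i.val + (n - 1) - n = i.val - 1 := by omega
      rw [h2, Nat.mod_eq_of_lt (by omega)]
    exact (cyc_adj_succ hn (by simp [hv]; omega)).symm

/-- the four standard neighbours of a vertex in the torus -/
def nbr (p q : ℕ) (hp3 : 3 ≤ p) (hq3 : 3 ≤ q) (v : Fin p × Fin q) : Fin 4 → Fin p × Fin q :=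
  fun t => match t with
  | 0 => (⟨(v.1.val + 1) % p, Nat.mod_lt _ (by omega)⟩, v.2)
  | 1 => (⟨(v.1.val + (p - 1)) % p, Nat.mod_lt _ (by omega)⟩, v.2)
  | 2 => (v.1, ⟨(v.2.val + 1) % q, Nat.mod_lt _ (by omega)⟩)
  | 3 => (v.1, ⟨(v.2.val + (q - 1)) % q, Nat.mod_lt _ (by omega)⟩)

lemma nbr_adj (hp3 : 3 ≤ p) (hq3 : 3 ≤ q) (v : Fin p × Fin q) (t : Fin 4) :
    (cycleGraph p □ cycleGraph q).Adj v (nbr p q hp3 hq3 v t) := by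
  fin_cases t
  · exact SimpleGraph.boxProd_adj.mpr (Or.inl ⟨cyc_adj_mod hp3 v.1, rfl⟩)
  · exact SimpleGraph.boxProd_adj.mpr (Or.inl ⟨cyc_adj_modpred hp3 v.1, rfl⟩)
  · exact SimpleGraph.boxProd_adj.mpr (Or.inr ⟨cyc_adj_mod hq3 v.2, rfl⟩)
  · exact SimpleGraph.boxProd_adj.mpr (Or.inr ⟨cyc_adj_modpred hq3 v.2, rfl⟩)

lemma mod_succ_char {n x : ℕ} (hn : 3 ≤ n) (hx : x < n) :
    (x + 1 < n ∧ (x + 1) % n = x + 1) ∨ (x + 1 = n ∧ (x + 1) % n = 0) := by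
  rcases Nat.lt_or_ge (x + 1) n with h | h
  · exact Or.inl ⟨h, Nat.mod_eq_of_lt h⟩
  · have h2 : x + 1 = n := by omega
    exact Or.inr ⟨h2, by rw [h2, Nat.mod_self]⟩

lemma mod_pred_char {n x : ℕ} (hn : 3 ≤ n) (hx : x < n) :
    (1 ≤ x ∧ (x + (n - 1)) % n = x - 1) ∨ (x = 0 ∧ (x + (n - 1)) % n = n - 1) := by
  rcases Nat.eq_zero_or_pos x with h | h
  · exact Or.inr ⟨h, by rw [h, Nat.zero_add, Nat.mod_eq_of_lt (by omega)]⟩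
  · refine Or.inl ⟨h, ?_⟩
    rw [Nat.mod_eq_sub_mod (by omega : n ≤ x + (n - 1))]
    have h2 : x + (n - 1) - n = x - 1 := by omega
    rw [h2, Nat.mod_eq_of_lt (by omega)]

lemma nbr_inj (hp3 : 3 ≤ p) (hq3 : 3 ≤ q) (v : Fin p × Fin q) {s t : Fin 4}
    (h : nbr p q hp3 hq3 v s = nbr p q hp3 hq3 v t) : s = t := by
  have h1 := mod_succ_char hp3 v.1.isLt
  have h2 := mod_pred_char hp3 v.1.isLt
  have h3 := mod_succ_char hq3 v.2.isLt
  have h4 := mod_pred_char hq3 v.2.isLt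
  have hv1 := v.1.isLt; have hv2 := v.2.isLt
  fin_cases s <;> fin_cases t <;>
    first
      | rfl
      | (exfalso; simp only [nbr, Prod.ext_iff, Fin.ext_iff, Fin.val_mk] at h; omega)

lemma nbr_ne_self (hp3 : 3 ≤ p) (hq3 : 3 ≤ q) (v : Fin p × Fin q) (t : Fin 4) :
    nbr p q hp3 hq3 v t ≠ v :=
  fun h => (nbr_adj hp3 hq3 v t).ne (by rw [h])

lemma page_surj (hp3 : 3 ≤ p) (hq3 : 3 ≤ q)
    (emb : MatchingBookEmbedding (cycleGraph p □ cycleGraph q) 4)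
    (v : Fin p × Fin q) (c : Fin 4) :
    ∃ e : (cycleGraph p □ cycleGraph q).edgeSet, v ∈ (e : Sym2 (Fin p × Fin q)) ∧
      emb.page e = c := by
  let E : Fin 4 → (cycleGraph p □ cycleGraph q).edgeSet :=
    fun t => ⟨s(v, nbr p q hp3 hq3 v t), (SimpleGraph.mem_edgeSet _).mpr (nbr_adj hp3 hq3 v t)⟩
  have hginj : Function.Injective (fun t => emb.page (E t)) := by
    intro s t h
    by_contra hst
    have hEne : E s ≠ E t := by
      intro hcon
      apply hst
      have h2 : s(v, nbr p q hp3 hq3 v s) = s(v, nbr p q hp3 hq3 v t) :=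
        congrArg Subtype.val hcon
      exact nbr_inj hp3 hq3 v (Sym2.congr_right.mp h2)
    exact emb.matching (E s) (E t) hEne h v (Sym2.mem_mk_left _ _) (Sym2.mem_mk_left _ _)
  have hgsurj : Function.Surjective (fun t => emb.page (E t)) :=
    (Finite.injective_iff_surjective).mp hginj
  obtain ⟨t, ht⟩ := hgsurj c
  exact ⟨E t, Sym2.mem_mk_left _ _, ht⟩

lemma lb4 (hp3 : 3 ≤ p) (hq3 : 3 ≤ q) {k : ℕ}
    (emb : MatchingBookEmbedding (cycleGraph p □ cycleGraph q) k) : 4 ≤ k := by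
  have hq0 : 0 < q := by omega
  have hp0 : 0 < p := by omega
  let v : Fin p × Fin q := (⟨0, hp0⟩, ⟨0, hq0⟩)
  let E : Fin 4 → (cycleGraph p □ cycleGraph q).edgeSet :=
    fun t => ⟨s(v, nbr p q hp3 hq3 v t), (SimpleGraph.mem_edgeSet _).mpr (nbr_adj hp3 hq3 v t)⟩
  have hginj : Function.Injective (fun t => emb.page (E t)) := by
    intro s t h
    by_contra hst
    have hEne : E s ≠ E t := by
      intro hcon
      apply hst
      have h2 : s(v, nbr p q hp3 hq3 v s) = s(v, nbr p q hp3 hq3 v t) :=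
        congrArg Subtype.val hcon
      exact nbr_inj hp3 hq3 v (Sym2.congr_right.mp h2)
    exact emb.matching (E s) (E t) hEne h v (Sym2.mem_mk_left _ _) (Sym2.mem_mk_left _ _)
  calc 4 = Fintype.card (Fin 4) := by simp
    _ ≤ Fintype.card (Fin k) := Fintype.card_le_of_injective _ hginj
    _ = k := by simp

end LB

section No4

variable {p q : ℕ}

lemma parity_adj (hp3 : 3 ≤ p) (hq3 : 3 ≤ q)
    (emb : MatchingBookEmbedding (cycleGraph p □ cycleGraph q) 4) :
    ∀ u w : Fin p × Fin q, (cycleGraph p □ cycleGraph q).Adj u w →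
      ((emb.ord u).val + (emb.ord w).val) % 2 = 1 := by
  let P : Fin p × Fin q → ℕ := fun v => (emb.ord v).val
  have hPinj : ∀ {x y : Fin p × Fin q}, P x = P y → x = y :=
    fun h => emb.ord.injective (Fin.ext h)
  have key : ∀ u w : Fin p × Fin q, (cycleGraph p □ cycleGraph q).Adj u w → P u < P w → (P u + P w) % 2 = 1 := by
    intro u w huw hlt
    let e0 : (cycleGraph p □ cycleGraph q).edgeSet := ⟨s(u, w), (SimpleGraph.mem_edgeSet _).mpr huw⟩
    let c := emb.page e0
    -- the partner relation on page c
    let Q : Fin p × Fin q → Fin p × Fin q → Prop := fun x y =>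
      ∃ e : (cycleGraph p □ cycleGraph q).edgeSet, (e : Sym2 (Fin p × Fin q)) = s(x, y) ∧ emb.page e = c
    have hQex : ∀ x, ∃ y, Q x y := by
      intro x
      obtain ⟨e, hx, hpc⟩ := page_surj hp3 hq3 emb x c
      refine ⟨Sym2.Mem.other hx, e, ?_, hpc⟩
      exact (Sym2.other_spec hx).symm
    have hQuniq : ∀ x y y', Q x y → Q x y' → y = y' := by
      rintro x y y' ⟨e, he, hpc⟩ ⟨e', he', hpc'⟩
      have hee : e = e' := by
        by_contra hne
        exact emb.matching e e' hne (hpc.trans hpc'.symm) x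
          (by rw [he]; exact Sym2.mem_mk_left _ _) (by rw [he']; exact Sym2.mem_mk_left _ _)
      rw [hee] at he
      exact Sym2.congr_right.mp (he.symm.trans he')
    let f : Fin p × Fin q → Fin p × Fin q := fun x => Classical.choose (hQex x)
    have hQf : ∀ x, Q x (f x) := fun x => Classical.choose_spec (hQex x)
    have hQadj : ∀ x y, Q x y → (cycleGraph p □ cycleGraph q).Adj x y := by
      rintro x y ⟨e, he, -⟩
      have h := e.2
      rw [he, SimpleGraph.mem_edgeSet] at h
      exact h
    have hQsymm : ∀ x y, Q x y → Q y x := by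
      rintro x y ⟨e, he, hpc⟩
      exact ⟨e, by rw [he, Sym2.eq_swap], hpc⟩
    have hOlt : ∀ a b : Fin p × Fin q, P a < P b → emb.ord a < emb.ord b := fun a b h => h
    -- the strict interval
    classical
    let T : Finset (Fin p × Fin q) :=
      Finset.univ.filter (fun x => P u < P x ∧ P x < P w)
    have hmemT : ∀ x, x ∈ T ↔ (P u < P x ∧ P x < P w) := by
      intro x; simp [T]
    have hQc : ∀ x, x ∈ T → Q x (f x) ∧ f x ∈ T := by
      intro x hx
      rw [hmemT] at hx
      obtain ⟨e, he, hpc⟩ := hQf x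
      have hxu : x ≠ u := fun h => by rw [h] at hx; omega
      have hxw : x ≠ w := fun h => by rw [h] at hx; omega
      have hee0 : e ≠ e0 := by
        intro hcon
        have h2 : (e : Sym2 (Fin p × Fin q)) = s(u, w) := by rw [hcon]
        rw [he] at h2
        rcases Sym2.eq_iff.mp h2 with ⟨h3, -⟩ | ⟨h3, -⟩
        · exact hxu h3
        · exact hxw h3
      have hfnotin : (f x) ∉ (e0 : Sym2 (Fin p × Fin q)) :=
        emb.matching e e0 hee0 hpc (f x) (by rw [he]; exact Sym2.mem_mk_right _ _)
      have hfu : f x ≠ u := fun h => hfnotin (by rw [h]; exact Sym2.mem_mk_left _ _)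
      have hfw : f x ≠ w := fun h => hfnotin (by rw [h]; exact Sym2.mem_mk_right _ _)
      have hlow : ¬ (P (f x) < P u) := by
        intro hbad
        exact emb.noncross e e0 hpc (f x) x u w (by rw [he, Sym2.eq_swap]) rfl
          (hOlt _ _ hbad) (hOlt _ _ hx.1) (hOlt _ _ hx.2)
      have hhigh : ¬ (P w < P (f x)) := by
        intro hbad
        exact emb.noncross e0 e hpc.symm u w x (f x) rfl (by rw [he])
          (hOlt _ _ hx.1) (hOlt _ _ hx.2) (hOlt _ _ hbad)
      have h1 : P (f x) ≠ P u := fun h => hfu (hPinj h)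
      have h2 : P (f x) ≠ P w := fun h => hfw (hPinj h)
      refine ⟨⟨e, he, hpc⟩, ?_⟩
      rw [hmemT]
      omega
    have hTeven : Even T.card := by
      refine even_card_of_involution T f (fun x hx => (hQc x hx).2) ?_ ?_
      · intro x hx
        have hQfx : Q (f x) x := hQsymm _ _ (hQc x hx).1
        exact hQuniq (f x) (f (f x)) x (hQf (f x)) hQfx
      · intro x hx h
        have := (hQadj x (f x) (hQc x hx).1).ne
        exact this (by rw [h])
    have himg : T.image emb.ord = Finset.Ioo (emb.ord u) (emb.ord w) := by
      ext m
      rw [Finset.mem_image, Finset.mem_Ioo]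
      constructor
      · rintro ⟨x, hx, rfl⟩
        rw [hmemT] at hx
        exact ⟨hx.1, hx.2⟩
      · rintro ⟨h1, h2⟩
        refine ⟨emb.ord.symm m, ?_, emb.ord.apply_symm_apply m⟩
        rw [hmemT]
        have h3 : emb.ord (emb.ord.symm m) = m := emb.ord.apply_symm_apply m
        constructor
        · have := h1; rw [← h3] at this; exact this
        · have := h2; rw [← h3] at this; exact this
    have hcount : T.card = P w - P u - 1 := by
      have h1 : (T.image emb.ord).card = T.card :=
        Finset.card_image_of_injective T emb.ord.injective
      rw [himg] at h1
      rw [← h1, Fin.card_Ioo]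
    rw [hcount] at hTeven
    rw [Nat.even_iff] at hTeven
    omega
  intro u w huw
  show (P u + P w) % 2 = 1
  rcases lt_trichotomy (P u) (P w) with h' | h' | h'
  · exact key u w huw h'
  · exact absurd (hPinj h') huw.ne
  · have h2 := key w u huw.symm h'
    omega

def wv (p q : ℕ) (hp0 : 0 < p) (hq0 : 0 < q) (m : ℕ) : Fin p × Fin q :=
  (⟨0, hp0⟩, ⟨m % q, Nat.mod_lt _ hq0⟩)

lemma no4 (hp3 : 3 ≤ p) (hq3 : 3 ≤ q) (hqo : q % 2 = 1)
    (emb : MatchingBookEmbedding (cycleGraph p □ cycleGraph q) 4) : False := by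
  have hpar := parity_adj hp3 hq3 emb
  have hp0 : 0 < p := by omega
  have hq0 : 0 < q := by omega
  have hadjw : ∀ m, (cycleGraph p □ cycleGraph q).Adj (wv p q hp0 hq0 m) (wv p q hp0 hq0 (m + 1)) := by
    intro m
    refine SimpleGraph.boxProd_adj.mpr (Or.inr ⟨?_, rfl⟩)
    have hval : (m + 1) % q = ((wv p q hp0 hq0 m).2.val + 1) % q := by
      show (m + 1) % q = (m % q + 1) % q
      conv_lhs => rw [Nat.add_mod]
      rw [Nat.mod_eq_of_lt (show 1 < q by omega)]
    have heq : (wv p q hp0 hq0 (m + 1)).2 =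
        ⟨((wv p q hp0 hq0 m).2.val + 1) % q, Nat.mod_lt _ (by omega)⟩ := Fin.ext hval
    rw [heq]
    exact cyc_adj_mod hq3 (wv p q hp0 hq0 m).2
  have hstep : ∀ m, ((emb.ord (wv p q hp0 hq0 0)).val + m) % 2 =
      (emb.ord (wv p q hp0 hq0 m)).val % 2 := by
    intro m
    induction m with
    | zero => rfl
    | succ n ih =>
      have h2 := hpar (wv p q hp0 hq0 n) (wv p q hp0 hq0 (n + 1)) (hadjw n)
      omega
  have hq' : wv p q hp0 hq0 q = wv p q hp0 hq0 0 := by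
    unfold wv
    have h : q % q = 0 % q := by rw [Nat.mod_self, Nat.zero_mod]
    exact congrArg _ (Fin.ext h)
  have h3 := hstep q
  rw [hq'] at h3
  omega

end No4

section Build

variable {p q : ℕ}

set_option maxHeartbeats 4000000 in
lemma noncross_key (hp4 : 4 ≤ p) (hp2 : p % 2 = 0) (hq3 : 3 ≤ q)
    {a b c d : Fin p × Fin q}
    (hab : (cycleGraph p □ cycleGraph q).Adj a b)
    (hcd : (cycleGraph p □ cycleGraph q).Adj c d)
    (hpgv : pageF q a b = pageF q c d)
    (hq1 : pos q a < pos q c) (hq2 : pos q c < pos q b) (hq3' : pos q b < pos q d) :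
    False := by
  have hp3 : 3 ≤ p := by omega
  rw [pos, pos, lex_lt (ell_lt _ _) (ell_lt _ _)] at hq1 hq2 hq3'
  rcases SimpleGraph.boxProd_adj.mp hab with ⟨hab1, hab2⟩ | ⟨hab1, hab2⟩ <;>
    rcases SimpleGraph.boxProd_adj.mp hcd with ⟨hcd1, hcd2⟩ | ⟨hcd1, hcd2⟩
  · -- H-H
    rw [pageF, if_neg hab1.ne, pageF, if_neg hcd1.ne] at hpgv
    have cpe := cyc_pair hp3 hab1
    have cpf := cyc_pair hp3 hcd1
    have hfe : ell q a.1 a.2 + ell q b.1 b.2 = q - 1 := by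
      have h0 := ell_flip (q := q) (i1 := a.1) (i2 := b.1) hp2 (by rcases cpe with (h | h) | (h | h) <;> tauto) a.2
      have h1 : ell q b.1 b.2 = ell q b.1 a.2 := by rw [hab2]
      rw [h1]; exact h0
    have hff : ell q c.1 c.2 + ell q d.1 d.2 = q - 1 := by
      have h0 := ell_flip (q := q) (i1 := c.1) (i2 := d.1) hp2 (by rcases cpf with (h | h) | (h | h) <;> tauto) c.2
      have h1 : ell q d.1 d.2 = ell q d.1 c.2 := by rw [hcd2]
      rw [h1]; exact h0
    have b1 := a.1.isLt; have b2 := b.1.isLt; have b3 := c.1.isLt; have b4 := d.1.isLt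
    have e1 := ell_lt a.1 a.2; have e2 := ell_lt b.1 b.2
    have e3 := ell_lt c.1 c.2; have e4 := ell_lt d.1 d.2
    unfold hpageN at hpgv
    split_ifs at hpgv <;> omega
  · -- e H, f V
    rw [pageF, if_neg hab1.ne, pageF, if_pos hcd2] at hpgv
    exact absurd hpgv.symm (Nat.ne_of_lt vpage_lt_hpage)
  · -- e V, f H
    rw [pageF, if_pos hab2, pageF, if_neg hcd1.ne] at hpgv
    exact absurd hpgv (Nat.ne_of_lt vpage_lt_hpage)
  · -- V-V : no page information needed
    have vpe := vert_pair hq3 a.1 hab1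
    have vpf := vert_pair hq3 c.1 hcd1
    rw [← hab2] at hq2
    rw [← hab2, ← hcd2] at hq3'
    have e1 := ell_lt a.1 a.2; have e2 := ell_lt a.1 b.2
    have e3 := ell_lt c.1 c.2; have e4 := ell_lt c.1 d.2
    omega

set_option maxHeartbeats 4000000 in
lemma matching_key (hp4 : 4 ≤ p) (hp2 : p % 2 = 0) (hq3 : 3 ≤ q)
    {a b c d v : Fin p × Fin q}
    (hab : (cycleGraph p □ cycleGraph q).Adj a b)
    (hcd : (cycleGraph p □ cycleGraph q).Adj c d)
    (hpgv : pageF q a b = pageF q c d)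
    (hvne : ¬(a = c ∧ b = d ∨ a = d ∧ b = c))
    (hvab : v = a ∨ v = b) (hvcd : v = c ∨ v = d) :
    False := by
  have hp3 : 3 ≤ p := by omega
  rcases SimpleGraph.boxProd_adj.mp hab with ⟨hab1, hab2⟩ | ⟨hab1, hab2⟩ <;>
    rcases SimpleGraph.boxProd_adj.mp hcd with ⟨hcd1, hcd2⟩ | ⟨hcd1, hcd2⟩
  · -- H-H
    rw [pageF, if_neg hab1.ne, pageF, if_neg hcd1.ne] at hpgv
    have hrow : a.2 = c.2 := by
      have h1 : v.2 = a.2 := by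
        rcases hvab with h | h
        · rw [h]
        · rw [h, ← hab2]
      have h2 : v.2 = c.2 := by
        rcases hvcd with h | h
        · rw [h]
        · rw [h, ← hcd2]
      rw [← h1, h2]
    have hdiffcols : ¬((a.1.val = c.1.val ∧ b.1.val = d.1.val) ∨
        (a.1.val = d.1.val ∧ b.1.val = c.1.val)) := by
      intro hcon
      apply hvne
      rcases hcon with ⟨h1, h2⟩ | ⟨h1, h2⟩
      · exact Or.inl ⟨Prod.ext (Fin.ext h1) hrow,
          Prod.ext (Fin.ext h2) (by rw [← hab2, hrow, hcd2])⟩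
      · exact Or.inr ⟨Prod.ext (Fin.ext h1) (by rw [hrow, hcd2]),
          Prod.ext (Fin.ext h2) (by rw [← hab2, hrow])⟩
    have hvcolE : v.1.val = a.1.val ∨ v.1.val = b.1.val := by
      rcases hvab with h | h
      · exact Or.inl (by rw [h])
      · exact Or.inr (by rw [h])
    have hvcolF : v.1.val = c.1.val ∨ v.1.val = d.1.val := by
      rcases hvcd with h | h
      · exact Or.inl (by rw [h])
      · exact Or.inr (by rw [h])
    have cpe := cyc_pair hp3 hab1
    have cpf := cyc_pair hp3 hcd1
    have b1 := a.1.isLt; have b2 := b.1.isLt; have b3 := c.1.isLt; have b4 := d.1.isLt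
    unfold hpageN at hpgv
    split_ifs at hpgv <;> omega
  · -- e H, f V : pages differ
    rw [pageF, if_neg hab1.ne, pageF, if_pos hcd2] at hpgv
    exact absurd hpgv.symm (Nat.ne_of_lt vpage_lt_hpage)
  · -- e V, f H
    rw [pageF, if_pos hab2, pageF, if_neg hcd1.ne] at hpgv
    exact absurd hpgv (Nat.ne_of_lt vpage_lt_hpage)
  · -- V-V
    have hcac : c.1 = a.1 := by
      have h1 : v.1 = a.1 := by
        rcases hvab with h | h
        · rw [h]
        · rw [h, ← hab2]
      have h2 : v.1 = c.1 := by
        rcases hvcd with h | h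
        · rw [h]
        · rw [h, ← hcd2]
      rw [← h2, h1]
    rw [pageF, if_pos hab2, pageF, if_pos hcd2, hcac] at hpgv
    have vpe := vert_pair hq3 a.1 hab1
    have vpf := vert_pair hq3 a.1 hcd1
    have hdiff : ¬((ell q a.1 a.2 = ell q a.1 c.2 ∧ ell q a.1 b.2 = ell q a.1 d.2) ∨
        (ell q a.1 a.2 = ell q a.1 d.2 ∧ ell q a.1 b.2 = ell q a.1 c.2)) := by
      intro hcon
      apply hvne
      rcases hcon with ⟨h1, h2⟩ | ⟨h1, h2⟩
      · exact Or.inl ⟨Prod.ext hcac.symm (ell_inj h1),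
          Prod.ext (by rw [← hab2, ← hcac, hcd2]) (ell_inj h2)⟩
      · exact Or.inr ⟨Prod.ext (by rw [← hcac, hcd2]) (ell_inj h1),
          Prod.ext (by rw [← hab2, ← hcac]) (ell_inj h2)⟩
    have hvE : ell q a.1 v.2 = ell q a.1 a.2 ∨ ell q a.1 v.2 = ell q a.1 b.2 := by
      rcases hvab with h | h
      · exact Or.inl (by rw [h])
      · exact Or.inr (by rw [h])
    have hvF : ell q a.1 v.2 = ell q a.1 c.2 ∨ ell q a.1 v.2 = ell q a.1 d.2 := by
      rcases hvcd with h | h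
      · exact Or.inl (by rw [h])
      · exact Or.inr (by rw [h])
    have b1 := ell_lt a.1 a.2; have b2 := ell_lt a.1 b.2
    have b3 := ell_lt a.1 c.2; have b4 := ell_lt a.1 d.2
    unfold vpageN at hpgv
    split_ifs at hpgv <;> omega

end Build

section Final

variable {p q : ℕ}

lemma build (hp4 : 4 ≤ p) (hp2 : p % 2 = 0) (hq3 : 3 ≤ q) :
    Nonempty (MatchingBookEmbedding (cycleGraph p □ cycleGraph q)
      (if q % 2 = 0 then 4 else 5)) := by
  let F : Fin p × Fin q → Fin (Fintype.card (Fin p × Fin q)) :=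
    fun v => ⟨pos q v, by simp only [Fintype.card_prod, Fintype.card_fin]; exact pos_lt v⟩
  have hFbij : Function.Bijective F := by
    rw [Fintype.bijective_iff_injective_and_card]
    refine ⟨fun u v h => pos_inj ?_, by simp⟩
    simpa [F, Fin.mk.injEq] using h
  have hFlt : ∀ x y : Fin p × Fin q,
      (Equiv.ofBijective F hFbij) x < (Equiv.ofBijective F hFbij) y → pos q x < pos q y :=
    fun x y h => h
  refine ⟨⟨Equiv.ofBijective F hFbij, fun e => ⟨pageN q e.val, pageN_lt e.val⟩, ?_, ?_⟩⟩
  · intro e f hne hpg v hv hv'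
    obtain ⟨a, b, he⟩ := sym2_cases e.val
    obtain ⟨c, d, hf⟩ := sym2_cases f.val
    have hab : (cycleGraph p □ cycleGraph q).Adj a b := by
      have h := e.2; rwa [he, SimpleGraph.mem_edgeSet] at h
    have hcd : (cycleGraph p □ cycleGraph q).Adj c d := by
      have h := f.2; rwa [hf, SimpleGraph.mem_edgeSet] at h
    have hpgv : pageF q a b = pageF q c d := by
      have h := congrArg Fin.val hpg
      simpa [he, hf, pageN] using h
    have hvab : v = a ∨ v = b := by
      rw [show (e : Sym2 (Fin p × Fin q)) = s(a, b) from he, Sym2.mem_iff] at hv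
      exact hv
    have hvcd : v = c ∨ v = d := by
      rw [show (f : Sym2 (Fin p × Fin q)) = s(c, d) from hf, Sym2.mem_iff] at hv'
      exact hv'
    have hvne : ¬(a = c ∧ b = d ∨ a = d ∧ b = c) := fun hcon =>
      hne (Subtype.ext (by rw [he, hf]; exact Sym2.eq_iff.mpr hcon))
    exact matching_key hp4 hp2 hq3 hab hcd hpgv hvne hvab hvcd
  · intro e f hpg a b c d he hf h1 h2 h3
    have hab : (cycleGraph p □ cycleGraph q).Adj a b := by
      have h := e.2
      rw [show (e : Sym2 (Fin p × Fin q)) = s(a, b) from he, SimpleGraph.mem_edgeSet] at h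
      exact h
    have hcd : (cycleGraph p □ cycleGraph q).Adj c d := by
      have h := f.2
      rw [show (f : Sym2 (Fin p × Fin q)) = s(c, d) from hf, SimpleGraph.mem_edgeSet] at h
      exact h
    have hpgv : pageF q a b = pageF q c d := by
      have h := congrArg Fin.val hpg
      simpa [he, hf, pageN] using h
    exact noncross_key hp4 hp2 hq3 hab hcd hpgv (hFlt _ _ h1) (hFlt _ _ h2) (hFlt _ _ h3)

end Final

end Stmt16

/-- `mbt (C_p □ C_q) = 4` when `p, q ≥ 4` are both even, and
`mbt (C_p □ C_q) = 5` when `p ≥ 4` is even and `q ≥ 3` is odd. -/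
theorem stmt_16 (p q : ℕ) :
    (Even p → Even q → 4 ≤ p → 4 ≤ q →
      mbt (cycleGraph p □ cycleGraph q) = 4) ∧
    (Even p → Odd q → 4 ≤ p → 3 ≤ q →
      mbt (cycleGraph p □ cycleGraph q) = 5) := by
  constructor
  · intro hpe hqe hp4 hq4
    have hp2 : p % 2 = 0 := Nat.even_iff.mp hpe
    have hq2 : q % 2 = 0 := Nat.even_iff.mp hqe
    have hmem : 4 ∈ {k | Nonempty (MatchingBookEmbedding (cycleGraph p □ cycleGraph q) k)} := by
      have h := Stmt16.build (p := p) (q := q) hp4 hp2 (by omega)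
      rw [if_pos hq2] at h
      exact h
    refine le_antisymm (Nat.sInf_le hmem) (le_csInf ⟨4, hmem⟩ ?_)
    rintro m ⟨emb⟩
    exact Stmt16.lb4 (by omega) (by omega) emb
  · intro hpe hqo hp4 hq3
    have hp2 : p % 2 = 0 := Nat.even_iff.mp hpe
    have hq1 : q % 2 = 1 := Nat.odd_iff.mp hqo
    have hmem : 5 ∈ {k | Nonempty (MatchingBookEmbedding (cycleGraph p □ cycleGraph q) k)} := by
      have h := Stmt16.build (p := p) (q := q) hp4 hp2 hq3
      rw [if_neg (by omega)] at h
      exact h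
    refine le_antisymm (Nat.sInf_le hmem) (le_csInf ⟨5, hmem⟩ ?_)
    rintro m ⟨emb⟩
    by_contra hlt
    push_neg at hlt
    have h4 : 4 ≤ m := Stmt16.lb4 (by omega) hq3 emb
    have hm : m = 4 := by omega
    subst hm
    exact Stmt16.no4 (by omega) hq3 hq1 emb
end
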